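/- arXiv:2008.08367 — 4 statements merged into one kernel-verified Lean document; each statement's English description precedes it below -/
import Mathlib

section
/- Let r be a graphon with η ≤ r ≤ 1−η on [0,1]^2 for some η > 0. Then ψ_r is strictly decreasing on the interval [0, C_r] and strictly increasing on the interval [C_r, 1]. -/
open MeasureTheory Real Filter Set Topology

noncomputable section

/-- The unit interval `[0,1]` as a subset of `ℝ`. -/
def UI : Set ℝ := Set.Icc 0 1

/-- A graphon: a symmetric measurable function `[0,1]² → [0,1]`. -/
def IsGraphon (h : ℝ → ℝ → ℝ) : Prop :=
  Measurable (Function.uncurry h) ∧ (∀ x y, h x y = h y x) ∧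
    ∀ x ∈ UI, ∀ y ∈ UI, h x y ∈ Set.Icc (0:ℝ) 1

/-- The operator norm of the integral operator `T_h` on `L²([0,1])` associated with a
symmetric bounded kernel `h`, expressed via its quadratic form. -/
def gOpNorm (h : ℝ → ℝ → ℝ) : ℝ :=
  sSup {t : ℝ | ∃ u : ℝ → ℝ, Measurable u ∧ IntegrableOn (fun x => u x ^ 2) UI ∧
    (∫ x in UI, u x ^ 2) ≤ 1 ∧ t = |∫ x in UI, ∫ y in UI, u x * h x y * u y|}

/-- Relative entropy of Bernoulli(a) with respect to Bernoulli(b), with `0 log 0 = 0`. -/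
def relEnt (a b : ℝ) : ℝ :=
  a * Real.log (a / b) + (1 - a) * Real.log ((1 - a) / (1 - b))

/-- The rate function `I_r(h) = ∫∫ R(h(x,y) | r(x,y)) dx dy`. -/
def Ient (r h : ℝ → ℝ → ℝ) : ℝ := ∫ x in UI, ∫ y in UI, relEnt (h x y) (r x y)

/-- The rate function `ψ_r(β) = inf { I_r(h) : h graphon, ‖T_h‖ = β }`. -/
def psiRate (r : ℝ → ℝ → ℝ) (β : ℝ) : ℝ :=
  sInf {c : ℝ | ∃ h : ℝ → ℝ → ℝ, IsGraphon h ∧ gOpNorm h = β ∧ Ient r h = c}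

/-- The `L²([0,1]²)` norm of a kernel. -/
def L2norm2 (f : ℝ → ℝ → ℝ) : ℝ := Real.sqrt (∫ x in UI, ∫ y in UI, f x y ^ 2)

end

/-!
Pinsker's inequality `R(a|b) ≥ 2(a - b)²` and the Hilbert–Schmidt bound
`|‖T_h‖ - ‖T_k‖| ≤ ‖h - k‖_{L²}` give `ψ_r(β) ≥ 2(β - C_r)²`, so `ψ_r > 0` away from `C_r`.
Conversely, if `‖T_h‖ = a`, then along the segment `h_t = (1 - t) h + t r` the norm `‖T_{h_t}‖`
moves 1-Lipschitz from `a` to `C_r`, hence reaches any `b` between them at some `t ≥ |b - a|`,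
while convexity of `R(·|r)` gives `I_r(h_t) ≤ (1 - t) I_r(h)`. Therefore
`ψ_r(b) ≤ (1 - |b - a|) ψ_r(a) < ψ_r(a)`.
-/
theorem integral_abs_mul_le_sqrt_mul_sqrt {α : Type*} [MeasurableSpace α] {μ : Measure α}
    {f g : α → ℝ} (hf : MemLp f 2 μ) (hg : MemLp g 2 μ) :
    ∫ a, |f a * g a| ∂μ ≤ √(∫ a, f a ^ 2 ∂μ) * √(∫ a, g a ^ 2 ∂μ) := by
  have h := integral_mul_norm_le_Lp_mul_Lq Real.HolderConjugate.two_two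
    (by simpa using hf) (by simpa using hg)
  simpa only [Real.norm_eq_abs, abs_mul, Real.rpow_two, sq_abs, ← Real.sqrt_eq_rpow] using h

lemma measurableSet_UI : MeasurableSet UI := measurableSet_Icc

lemma volume_UI : volume UI = 1 := by simp [UI, Real.volume_Icc]

instance : IsFiniteMeasure (volume.restrict UI) := ⟨by simp [volume_UI]⟩

lemma volume_real_UI : volume.real UI = 1 := by simp [Measure.real, volume_UI]

lemma setIntegral_UI_const (c : ℝ) : ∫ _ in UI, c = c := by simp [volume_real_UI]

lemma integrableOn_UI_of_abs_le {f : ℝ → ℝ} (hf : Measurable f) {c : ℝ}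
    (hc : ∀ x ∈ UI, |f x| ≤ c) : IntegrableOn f UI :=
  (integrable_const c).mono' hf.aestronglyMeasurable
    ((ae_restrict_iff' measurableSet_UI).mpr (.of_forall hc))

def BddKernel (F : ℝ → ℝ → ℝ) (c : ℝ) : Prop :=
  Measurable (Function.uncurry F) ∧ ∀ x ∈ UI, ∀ y ∈ UI, |F x y| ≤ c

namespace BddKernel

variable {F G : ℝ → ℝ → ℝ} {c d : ℝ}

lemma nonneg (hF : BddKernel F c) : 0 ≤ c :=
  (abs_nonneg _).trans (hF.2 0 (by simp [UI]) 0 (by simp [UI]))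

lemma measurable_section (hF : BddKernel F c) (x : ℝ) : Measurable (F x) :=
  hF.1.comp measurable_prodMk_left

lemma integrableOn_section (hF : BddKernel F c) {x : ℝ} (hx : x ∈ UI) : IntegrableOn (F x) UI :=
  integrableOn_UI_of_abs_le (hF.measurable_section x) (hF.2 x hx)

lemma abs_setIntegral_le (hF : BddKernel F c) {x : ℝ} (hx : x ∈ UI) :
    |∫ y in UI, F x y| ≤ c :=
  calc |∫ y in UI, F x y| ≤ ∫ y in UI, |F x y| := abs_integral_le_integral_abs
    _ ≤ ∫ _ in UI, c := setIntegral_mono_on (hF.integrableOn_section hx).abs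
        (integrableOn_const (by simp [volume_UI])) measurableSet_UI (hF.2 x hx)
    _ = c := setIntegral_UI_const c

lemma integrableOn_setIntegral (hF : BddKernel F c) :
    IntegrableOn (fun x => ∫ y in UI, F x y) UI :=
  integrableOn_UI_of_abs_le (hF.1.stronglyMeasurable.integral_prod_right').measurable
    fun _ hx => hF.abs_setIntegral_le hx

lemma sub (hF : BddKernel F c) (hG : BddKernel G d) :
    BddKernel (fun x y => F x y - G x y) (c + d) :=
  ⟨hF.1.sub hG.1, fun x hx y hy =>
    (abs_sub _ _).trans (add_le_add (hF.2 x hx y hy) (hG.2 x hx y hy))⟩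

lemma sq (hF : BddKernel F c) : BddKernel (fun x y => F x y ^ 2) (c ^ 2) :=
  ⟨hF.1.pow_const 2, fun x hx y hy => by
    rw [abs_pow]; exact pow_le_pow_left₀ (abs_nonneg _) (hF.2 x hx y hy) 2⟩

lemma setIntegral_setIntegral_mono (hF : BddKernel F c) (hG : BddKernel G d)
    (hle : ∀ x ∈ UI, ∀ y ∈ UI, F x y ≤ G x y) :
    ∫ x in UI, ∫ y in UI, F x y ≤ ∫ x in UI, ∫ y in UI, G x y :=
  setIntegral_mono_on hF.integrableOn_setIntegral hG.integrableOn_setIntegral measurableSet_UI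
    fun x hx => setIntegral_mono_on (hF.integrableOn_section hx) (hG.integrableOn_section hx)
      measurableSet_UI (hle x hx)

lemma const_mul (hF : BddKernel F c) (a : ℝ) :
    BddKernel (fun x y => a * F x y) (|a| * c) :=
  ⟨hF.1.const_mul a, fun x hx y hy => by
    rw [abs_mul]; exact mul_le_mul_of_nonneg_left (hF.2 x hx y hy) (abs_nonneg a)⟩

end BddKernel

lemma IsGraphon.bddKernel {h : ℝ → ℝ → ℝ} (hh : IsGraphon h) : BddKernel h 1 :=
  ⟨hh.1, fun x hx y hy => abs_le.mpr ⟨by linarith [(hh.2.2 x hx y hy).1], (hh.2.2 x hx y hy).2⟩⟩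

lemma setIntegral_setIntegral_nonneg {F : ℝ → ℝ → ℝ} (hF : ∀ x ∈ UI, ∀ y ∈ UI, 0 ≤ F x y) :
    0 ≤ ∫ x in UI, ∫ y in UI, F x y :=
  setIntegral_nonneg measurableSet_UI fun x hx => setIntegral_nonneg measurableSet_UI (hF x hx)

lemma L2norm2_le {F : ℝ → ℝ → ℝ} {c : ℝ} (hF : BddKernel F c) : L2norm2 F ≤ c := by
  have hc : BddKernel (fun _ _ => c ^ 2) (c ^ 2) :=
    ⟨measurable_const, fun _ _ _ _ => (abs_of_nonneg (by positivity)).le⟩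
  have h := hF.sq.setIntegral_setIntegral_mono hc fun x hx y hy => by
    simpa [sq_abs] using hF.sq.2 x hx y hy
  simp only [setIntegral_UI_const] at h
  exact Real.sqrt_le_iff.mpr ⟨hF.nonneg, h⟩

lemma L2norm2_const_mul (a : ℝ) (F : ℝ → ℝ → ℝ) :
    L2norm2 (fun x y => a * F x y) = |a| * L2norm2 F := by
  simp only [L2norm2, mul_pow, integral_const_mul, Real.sqrt_mul (sq_nonneg a), Real.sqrt_sq_eq_abs]

lemma L2norm2_sub_comm (F G : ℝ → ℝ → ℝ) :
    L2norm2 (fun x y => F x y - G x y) = L2norm2 (fun x y => G x y - F x y) := by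
  simp only [L2norm2, ← neg_sub (G _ _), neg_sq]

/-- `gOpNorm h` is the supremum of `|quadForm h u|` over `u` with `InUnitBall u`. -/
def InUnitBall (u : ℝ → ℝ) : Prop :=
  Measurable u ∧ IntegrableOn (fun x => u x ^ 2) UI ∧ ∫ x in UI, u x ^ 2 ≤ 1

lemma InUnitBall.memLp {u : ℝ → ℝ} (hu : InUnitBall u) : MemLp u 2 (volume.restrict UI) :=
  (memLp_two_iff_integrable_sq hu.1.aestronglyMeasurable).mpr hu.2.1

noncomputable def kernelOp (d : ℝ → ℝ → ℝ) (u : ℝ → ℝ) (x : ℝ) : ℝ := ∫ y in UI, d x y * u y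

noncomputable def quadForm (d : ℝ → ℝ → ℝ) (u : ℝ → ℝ) : ℝ :=
  ∫ x in UI, ∫ y in UI, u x * d x y * u y

lemma quadForm_eq_integral_mul_kernelOp (d : ℝ → ℝ → ℝ) (u : ℝ → ℝ) :
    quadForm d u = ∫ x in UI, u x * kernelOp d u x := by
  simp only [quadForm, kernelOp, ← integral_const_mul, mul_assoc]

section KernelOp

variable {d h k : ℝ → ℝ → ℝ} {c c' : ℝ} {u : ℝ → ℝ}

lemma BddKernel.memLp_section (hd : BddKernel d c) {x : ℝ} (hx : x ∈ UI) :
    MemLp (d x) 2 (volume.restrict UI) :=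
  .of_bound (hd.measurable_section x).aestronglyMeasurable c
    ((ae_restrict_iff' measurableSet_UI).mpr (.of_forall (hd.2 x hx)))

lemma BddKernel.measurable_kernelOp (hd : BddKernel d c) (hu : Measurable u) :
    Measurable (kernelOp d u) :=
  ((hd.1.mul (hu.comp measurable_snd)).stronglyMeasurable.integral_prod_right').measurable

lemma BddKernel.abs_kernelOp_le (hd : BddKernel d c) (hu : MemLp u 2 (volume.restrict UI))
    {x : ℝ} (hx : x ∈ UI) :
    |kernelOp d u x| ≤ √(∫ y in UI, d x y ^ 2) * √(∫ y in UI, u y ^ 2) :=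
  abs_integral_le_integral_abs.trans
    (integral_abs_mul_le_sqrt_mul_sqrt (hd.memLp_section hx) hu)

lemma BddKernel.abs_kernelOp_le_const (hd : BddKernel d c) (hu : MemLp u 2 (volume.restrict UI))
    {x : ℝ} (hx : x ∈ UI) :
    |kernelOp d u x| ≤ c * √(∫ y in UI, u y ^ 2) := by
  refine (hd.abs_kernelOp_le hu hx).trans (mul_le_mul_of_nonneg_right ?_ (Real.sqrt_nonneg _))
  have h := hd.sq.abs_setIntegral_le hx
  rw [abs_le] at h
  exact Real.sqrt_le_iff.mpr ⟨hd.nonneg, h.2⟩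

lemma BddKernel.memLp_kernelOp (hd : BddKernel d c) (hu : MemLp u 2 (volume.restrict UI))
    (hum : Measurable u) : MemLp (kernelOp d u) 2 (volume.restrict UI) :=
  .of_bound (hd.measurable_kernelOp hum).aestronglyMeasurable _
    ((ae_restrict_iff' measurableSet_UI).mpr
      (.of_forall fun _ hx => hd.abs_kernelOp_le_const hu hx))

lemma BddKernel.abs_quadForm_le (hd : BddKernel d c) (hu : MemLp u 2 (volume.restrict UI))
    (hum : Measurable u) :
    |quadForm d u| ≤ L2norm2 d * ∫ x in UI, u x ^ 2 := by
  set U := ∫ x in UI, u x ^ 2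
  have hU : 0 ≤ U := setIntegral_nonneg measurableSet_UI fun _ _ => sq_nonneg _
  have hTu : ∫ x in UI, kernelOp d u x ^ 2 ≤ (∫ x in UI, ∫ y in UI, d x y ^ 2) * U := by
    rw [← integral_mul_const]
    refine setIntegral_mono_on ((memLp_two_iff_integrable_sq
      (hd.measurable_kernelOp hum).aestronglyMeasurable).mp (hd.memLp_kernelOp hu hum))
      (hd.sq.integrableOn_setIntegral.mul_const U) measurableSet_UI fun x hx => ?_
    have h := pow_le_pow_left₀ (abs_nonneg _) (hd.abs_kernelOp_le hu hx) 2
    rwa [sq_abs, mul_pow, Real.sq_sqrt (setIntegral_nonneg measurableSet_UI fun _ _ => sq_nonneg _),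
      Real.sq_sqrt hU] at h
  calc |quadForm d u| ≤ ∫ x in UI, |u x * kernelOp d u x| := by
        rw [quadForm_eq_integral_mul_kernelOp]; exact abs_integral_le_integral_abs
    _ ≤ √U * √(∫ x in UI, kernelOp d u x ^ 2) :=
        integral_abs_mul_le_sqrt_mul_sqrt hu (hd.memLp_kernelOp hu hum)
    _ ≤ √U * (L2norm2 d * √U) := by
        gcongr
        rw [L2norm2, ← Real.sqrt_mul (setIntegral_setIntegral_nonneg fun _ _ _ _ => sq_nonneg _)]
        exact Real.sqrt_le_sqrt hTu
    _ = L2norm2 d * U := by rw [mul_left_comm, Real.mul_self_sqrt hU]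

lemma BddKernel.kernelOp_sub (hh : BddKernel h c) (hk : BddKernel k c')
    (hu : MemLp u 2 (volume.restrict UI)) {x : ℝ} (hx : x ∈ UI) :
    kernelOp h u x - kernelOp k u x = kernelOp (fun x y => h x y - k x y) u x := by
  have hhu : Integrable (fun y => h x y * u y) (volume.restrict UI) :=
    (hh.memLp_section hx).integrable_mul hu
  have hku : Integrable (fun y => k x y * u y) (volume.restrict UI) :=
    (hk.memLp_section hx).integrable_mul hu
  simp only [kernelOp, ← integral_sub hhu hku, sub_mul]

lemma BddKernel.quadForm_sub (hh : BddKernel h c) (hk : BddKernel k c')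
    (hu : MemLp u 2 (volume.restrict UI)) (hum : Measurable u) :
    quadForm h u - quadForm k u = quadForm (fun x y => h x y - k x y) u := by
  simp only [quadForm_eq_integral_mul_kernelOp]
  have hTh : Integrable (fun x => u x * kernelOp h u x) (volume.restrict UI) :=
    hu.integrable_mul (hh.memLp_kernelOp hu hum)
  have hTk : Integrable (fun x => u x * kernelOp k u x) (volume.restrict UI) :=
    hu.integrable_mul (hk.memLp_kernelOp hu hum)
  rw [← integral_sub hTh hTk]
  exact setIntegral_congr_fun measurableSet_UI fun x hx => by
    simp only [← mul_sub, hh.kernelOp_sub hk hu hx]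

end KernelOp

section OpNorm

variable {h k : ℝ → ℝ → ℝ} {c c' : ℝ}

lemma gOpNorm_le_of_forall {M : ℝ} (hM : ∀ u, InUnitBall u → |quadForm h u| ≤ M) :
    gOpNorm h ≤ M :=
  csSup_le ⟨0, fun _ => 0, measurable_const, by simp, by simp, by simp⟩
    fun _ ⟨u, hu₁, hu₂, hu₃, ht⟩ => ht ▸ hM u ⟨hu₁, hu₂, hu₃⟩

lemma BddKernel.abs_quadForm_le_L2norm2 (hh : BddKernel h c) {u : ℝ → ℝ} (hu : InUnitBall u) :
    |quadForm h u| ≤ L2norm2 h :=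
  (hh.abs_quadForm_le hu.memLp hu.1).trans
    (mul_le_of_le_one_right (Real.sqrt_nonneg _) hu.2.2)

lemma BddKernel.abs_quadForm_le_gOpNorm (hh : BddKernel h c) {u : ℝ → ℝ} (hu : InUnitBall u) :
    |quadForm h u| ≤ gOpNorm h :=
  le_csSup ⟨L2norm2 h, fun _ ⟨_, hv₁, hv₂, hv₃, ht⟩ =>
    ht ▸ hh.abs_quadForm_le_L2norm2 ⟨hv₁, hv₂, hv₃⟩⟩ ⟨u, hu.1, hu.2.1, hu.2.2, rfl⟩

lemma BddKernel.gOpNorm_nonneg (hh : BddKernel h c) : 0 ≤ gOpNorm h :=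
  (abs_nonneg _).trans
    (hh.abs_quadForm_le_gOpNorm (u := fun _ => 0) ⟨measurable_const, by simp, by simp⟩)

lemma BddKernel.gOpNorm_le (hh : BddKernel h c) : gOpNorm h ≤ c :=
  gOpNorm_le_of_forall fun _ hu => (hh.abs_quadForm_le_L2norm2 hu).trans (L2norm2_le hh)

lemma BddKernel.gOpNorm_le_add_L2norm2 (hh : BddKernel h c) (hk : BddKernel k c') :
    gOpNorm h ≤ gOpNorm k + L2norm2 (fun x y => h x y - k x y) :=
  gOpNorm_le_of_forall fun u hu => calc
    |quadForm h u| ≤ |quadForm k u| + |quadForm h u - quadForm k u| := by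
      linarith [abs_sub_abs_le_abs_sub (quadForm h u) (quadForm k u)]
    _ ≤ gOpNorm k + L2norm2 (fun x y => h x y - k x y) := by
      rw [hh.quadForm_sub hk hu.memLp hu.1]
      exact add_le_add (hk.abs_quadForm_le_gOpNorm hu) ((hh.sub hk).abs_quadForm_le_L2norm2 hu)

lemma BddKernel.abs_gOpNorm_sub_le (hh : BddKernel h c) (hk : BddKernel k c') :
    |gOpNorm h - gOpNorm k| ≤ L2norm2 (fun x y => h x y - k x y) := by
  have h₁ := hh.gOpNorm_le_add_L2norm2 hk
  have h₂ := hk.gOpNorm_le_add_L2norm2 hh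
  rw [L2norm2_sub_comm] at h₂
  exact abs_sub_le_iff.mpr ⟨by linarith, by linarith⟩

lemma gOpNorm_const {β : ℝ} (hβ : 0 ≤ β) : gOpNorm (fun _ _ => β) = β := by
  have hker : BddKernel (fun _ _ => β) β :=
    ⟨measurable_const, fun _ _ _ _ => (abs_of_nonneg hβ).le⟩
  refine le_antisymm hker.gOpNorm_le ?_
  have hone : InUnitBall fun _ => 1 :=
    ⟨measurable_const, by simp [volume_UI], by simp [volume_real_UI]⟩
  simpa [quadForm, volume_real_UI, abs_of_nonneg hβ] using hker.abs_quadForm_le_gOpNorm hone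

lemma exists_isGraphon_gOpNorm_eq {β : ℝ} (hβ : β ∈ Icc 0 1) :
    ∃ h, IsGraphon h ∧ gOpNorm h = β :=
  ⟨fun _ _ => β, ⟨measurable_const, fun _ _ => rfl, fun _ _ _ _ => hβ⟩, gOpNorm_const hβ.1⟩

end OpNorm

section RelEnt

variable {a b : ℝ}

lemma relEnt_eq_neg_binEntropy (a : ℝ) (hb₀ : b ≠ 0) (hb₁ : b ≠ 1) :
    relEnt a b = -binEntropy a - a * log b - (1 - a) * log (1 - b) := by
  have hmul_log_div : ∀ {x y : ℝ}, y ≠ 0 → x * log (x / y) = x * log x - x * log y := by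
    intro x y hy
    rcases eq_or_ne x 0 with rfl | hx
    · simp
    · rw [log_div hx hy, mul_sub]
  rw [relEnt, hmul_log_div hb₀, hmul_log_div (sub_ne_zero.mpr hb₁.symm), binEntropy, log_inv,
    log_inv]
  ring

lemma relEnt_one_sub_one_sub (a b : ℝ) : relEnt (1 - a) (1 - b) = relEnt a b := by
  simp only [relEnt, sub_sub_cancel]
  ring

lemma two_mul_sq_le_relEnt_of_le (hb₀ : 0 < b) (hb₁ : b < 1) (hba : b ≤ a) (ha : a ≤ 1) :
    2 * (a - b) ^ 2 ≤ relEnt a b := by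
  set g : ℝ → ℝ := fun t => a * log t + (1 - a) * log (1 - t) + 2 * (t - a) ^ 2
  have hcont : ContinuousOn g (Icc b a) := by
    have hlog : ContinuousOn (fun t => a * log t) (Icc b a) :=
      continuousOn_const.mul (continuousOn_log.mono fun t ht => (hb₀.trans_le ht.1).ne')
    have hlog_one_sub : ContinuousOn (fun t => (1 - a) * log (1 - t)) (Icc b a) := by
      rcases ha.eq_or_lt with rfl | ha
      · simpa using continuousOn_const
      · exact continuousOn_const.mul ((continuousOn_const.sub continuousOn_id).log
          fun t ht => (sub_pos.mpr (ht.2.trans_lt ha)).ne')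
    exact (hlog.add hlog_one_sub).add (by fun_prop)
  have hderiv : ∀ t ∈ interior (Icc b a), HasDerivWithinAt g
      ((a - t) / (t * (1 - t)) - 4 * (a - t)) (interior (Icc b a)) t := by
    intro t ht
    rw [interior_Icc] at ht
    have ht₀ : 0 < t := hb₀.trans ht.1
    have ht₁ : 0 < 1 - t := by linarith [ht.2]
    refine HasDerivAt.hasDerivWithinAt ?_
    have := (((hasDerivAt_log ht₀.ne').const_mul a).add
      (((hasDerivAt_id t).const_sub 1).log ht₁.ne' |>.const_mul (1 - a))).add
      (((hasDerivAt_id t).sub_const a).pow 2 |>.const_mul 2)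
    convert this using 1
    · rfl
    · simp only [id]
      field_simp
      ring
  have hderiv_nonneg : ∀ t ∈ interior (Icc b a), 0 ≤ (a - t) / (t * (1 - t)) - 4 * (a - t) := by
    intro t ht
    rw [interior_Icc] at ht
    have ht₀ : 0 < t := hb₀.trans ht.1
    have ht₁ : 0 < 1 - t := by linarith [ht.2]
    -- `t (1 - t) ≤ 1 / 4`
    rw [sub_nonneg, le_div_iff₀ (mul_pos ht₀ ht₁)]
    nlinarith [mul_nonneg (sub_nonneg.mpr ht.2.le) (sq_nonneg (2 * t - 1))]
  have hmono := monotoneOn_of_hasDerivWithinAt_nonneg (convex_Icc b a) hcont hderiv hderiv_nonneg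
    ⟨le_rfl, hba⟩ ⟨hba, le_rfl⟩ hba
  rw [relEnt_eq_neg_binEntropy a hb₀.ne' hb₁.ne, binEntropy, log_inv, log_inv]
  simp only [g] at hmono
  nlinarith

/-- Pinsker's inequality for Bernoulli measures. -/
lemma two_mul_sq_le_relEnt (ha : a ∈ Icc 0 1) (hb : b ∈ Ioo 0 1) :
    2 * (a - b) ^ 2 ≤ relEnt a b := by
  rcases le_total b a with hba | hab
  · exact two_mul_sq_le_relEnt_of_le hb.1 hb.2 hba ha.2
  · have h := two_mul_sq_le_relEnt_of_le (a := 1 - a) (b := 1 - b) (by linarith [hb.2])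
      (by linarith [hb.1]) (by linarith) (by linarith [ha.1])
    rwa [relEnt_one_sub_one_sub, show 1 - a - (1 - b) = -(a - b) by ring, neg_sq] at h

lemma relEnt_nonneg (ha : a ∈ Icc 0 1) (hb : b ∈ Ioo 0 1) : 0 ≤ relEnt a b :=
  (by positivity : (0 : ℝ) ≤ 2 * (a - b) ^ 2).trans (two_mul_sq_le_relEnt ha hb)

lemma relEnt_le_neg_log {η : ℝ} (hη : 0 < η) (ha : a ∈ Icc 0 1) (hb : b ∈ Icc η (1 - η)) :
    relEnt a b ≤ -log η := by
  have hb₀ : 0 < b := hη.trans_le hb.1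
  have hlog_b : log η ≤ log b := log_le_log hη hb.1
  have hlog_one_sub_b : log η ≤ log (1 - b) := log_le_log hη (by linarith [hb.2])
  rw [relEnt_eq_neg_binEntropy a hb₀.ne' (by linarith [hb.2, hη])]
  nlinarith [binEntropy_nonneg ha.1 ha.2, mul_le_mul_of_nonneg_left hlog_b ha.1,
    mul_le_mul_of_nonneg_left hlog_one_sub_b (sub_nonneg.mpr ha.2)]

/-- Concavity of the binary entropy, together with `relEnt b b = 0`. -/
lemma relEnt_convexComb_le {t : ℝ} (ha : a ∈ Icc 0 1) (hb : b ∈ Ioo 0 1) (ht : t ∈ Icc 0 1) :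
    relEnt ((1 - t) * a + t * b) b ≤ (1 - t) * relEnt a b := by
  have hconcave := strictConcave_binEntropy.concaveOn.2 ha (Ioo_subset_Icc_self hb)
    (sub_nonneg.mpr ht.2) ht.1 (sub_add_cancel 1 t)
  simp only [smul_eq_mul] at hconcave
  have hb_self : binEntropy b = -(b * log b) - (1 - b) * log (1 - b) := by
    rw [binEntropy, log_inv, log_inv]; ring
  rw [relEnt_eq_neg_binEntropy _ hb.1.ne' hb.2.ne, relEnt_eq_neg_binEntropy _ hb.1.ne' hb.2.ne]
  linear_combination hconcave - t * hb_self

end RelEnt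

section Interpolation

def interpKernel (h r : ℝ → ℝ → ℝ) (t : ℝ) : ℝ → ℝ → ℝ :=
  fun x y => (1 - t) * h x y + t * r x y

variable {h r : ℝ → ℝ → ℝ}

@[simp] lemma interpKernel_zero : interpKernel h r 0 = h := by
  funext x y; simp [interpKernel]

@[simp] lemma interpKernel_one : interpKernel h r 1 = r := by
  funext x y; simp [interpKernel]

lemma IsGraphon.interpKernel (hh : IsGraphon h) (hr : IsGraphon r) {t : ℝ} (ht : t ∈ Icc 0 1) :
    IsGraphon (interpKernel h r t) := by
  refine ⟨(hh.1.const_mul _).add (hr.1.const_mul _), fun x y => by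
    simp only [_root_.interpKernel, hh.2.1 x y, hr.2.1 x y], fun x hx y hy => ?_⟩
  have hhxy := hh.2.2 x hx y hy
  have hrxy := hr.2.2 x hx y hy
  constructor <;> simp only [_root_.interpKernel] <;>
    nlinarith [hhxy.1, hhxy.2, hrxy.1, hrxy.2, ht.1, ht.2]

lemma abs_gOpNorm_interpKernel_sub_le (hh : IsGraphon h) (hr : IsGraphon r) {t s : ℝ}
    (ht : t ∈ Icc 0 1) (hs : s ∈ Icc 0 1) :
    |gOpNorm (interpKernel h r t) - gOpNorm (interpKernel h r s)| ≤ |t - s| := by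
  have hdiff : (fun x y => interpKernel h r t x y - interpKernel h r s x y) =
      fun x y => (t - s) * (r x y - h x y) := by
    funext x y; simp only [interpKernel]; ring
  have hrh : BddKernel (fun x y => r x y - h x y) 1 :=
    ⟨hr.1.sub hh.1, fun x hx y hy => abs_sub_le_iff.mpr
      ⟨by linarith [(hr.2.2 x hx y hy).2, (hh.2.2 x hx y hy).1],
        by linarith [(hr.2.2 x hx y hy).1, (hh.2.2 x hx y hy).2]⟩⟩
  calc _ ≤ L2norm2 (fun x y => interpKernel h r t x y - interpKernel h r s x y) :=
        (hh.interpKernel hr ht).bddKernel.abs_gOpNorm_sub_le (hh.interpKernel hr hs).bddKernel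
    _ = |t - s| * L2norm2 (fun x y => r x y - h x y) := by rw [hdiff, L2norm2_const_mul]
    _ ≤ |t - s| := mul_le_of_le_one_right (abs_nonneg _) (L2norm2_le hrh)

/-- `t ↦ ‖T_{(1-t)h + t r}‖` is 1-Lipschitz, so the intermediate value theorem applies. -/
lemma exists_gOpNorm_interpKernel_eq (hh : IsGraphon h) (hr : IsGraphon r) {b : ℝ}
    (hb : b ∈ uIcc (gOpNorm h) (gOpNorm r)) :
    ∃ t ∈ Icc (0 : ℝ) 1, |b - gOpNorm h| ≤ t ∧ gOpNorm (interpKernel h r t) = b := by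
  set f := fun t => gOpNorm (interpKernel h r t)
  have hf : LipschitzOnWith 1 f (Icc 0 1) := .of_dist_le_mul fun t ht s hs => by
    simpa [Real.dist_eq] using abs_gOpNorm_interpKernel_sub_le hh hr ht hs
  have hf₀ : f 0 = gOpNorm h := by simp [f]
  have hf₁ : f 1 = gOpNorm r := by simp [f]
  rw [← hf₀, ← hf₁] at hb
  have hI : uIcc (0 : ℝ) 1 = Icc 0 1 := uIcc_of_le zero_le_one
  obtain ⟨t, ht, rfl⟩ := intermediate_value_uIcc (hI ▸ hf.continuousOn) hb
  rw [hI] at ht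
  refine ⟨t, ht, ?_, rfl⟩
  simpa [f, abs_of_nonneg ht.1] using
    abs_gOpNorm_interpKernel_sub_le hh hr ht (left_mem_Icc.mpr zero_le_one)

end Interpolation

section RateFunction

variable {r h : ℝ → ℝ → ℝ} {η : ℝ}

lemma IsGraphon.bddKernel_relEnt (hh : IsGraphon h) (hr : IsGraphon r) (hη : 0 < η)
    (hrη : ∀ x ∈ UI, ∀ y ∈ UI, r x y ∈ Icc η (1 - η)) :
    BddKernel (fun x y => relEnt (h x y) (r x y)) (-log η) := by
  have hmeas : Measurable fun p : ℝ × ℝ => _root_.relEnt p.1 p.2 := by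
    unfold _root_.relEnt; fun_prop
  refine ⟨hmeas.comp (hh.1.prodMk hr.1), fun x hx y hy => ?_⟩
  rw [abs_of_nonneg (relEnt_nonneg (hh.2.2 x hx y hy)
    (Icc_subset_Ioo hη (by linarith) (hrη x hx y hy)))]
  exact relEnt_le_neg_log hη (hh.2.2 x hx y hy) (hrη x hx y hy)

lemma Ient_nonneg (hh : IsGraphon h) (hη : 0 < η)
    (hrη : ∀ x ∈ UI, ∀ y ∈ UI, r x y ∈ Icc η (1 - η)) : 0 ≤ Ient r h :=
  setIntegral_setIntegral_nonneg fun x hx y hy =>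
    relEnt_nonneg (hh.2.2 x hx y hy) (Icc_subset_Ioo hη (by linarith) (hrη x hx y hy))

lemma two_mul_sq_gOpNorm_sub_le_Ient (hh : IsGraphon h) (hr : IsGraphon r) (hη : 0 < η)
    (hrη : ∀ x ∈ UI, ∀ y ∈ UI, r x y ∈ Icc η (1 - η)) :
    2 * (gOpNorm h - gOpNorm r) ^ 2 ≤ Ient r h := by
  have hpinsker := ((hh.bddKernel.sub hr.bddKernel).sq.const_mul 2).setIntegral_setIntegral_mono
    (hh.bddKernel_relEnt hr hη hrη) fun x hx y hy =>
      two_mul_sq_le_relEnt (hh.2.2 x hx y hy) (Icc_subset_Ioo hη (by linarith) (hrη x hx y hy))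
  simp only [integral_const_mul] at hpinsker
  calc 2 * (gOpNorm h - gOpNorm r) ^ 2
      ≤ 2 * L2norm2 (fun x y => h x y - r x y) ^ 2 := by
        have hL2 := abs_le.mp (hh.bddKernel.abs_gOpNorm_sub_le hr.bddKernel)
        exact mul_le_mul_of_nonneg_left (sq_le_sq' hL2.1 hL2.2) zero_le_two
    _ ≤ Ient r h := by
        rwa [L2norm2, Real.sq_sqrt (setIntegral_setIntegral_nonneg fun _ _ _ _ => sq_nonneg _)]

lemma Ient_interpKernel_le (hh : IsGraphon h) (hr : IsGraphon r) (hη : 0 < η)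
    (hrη : ∀ x ∈ UI, ∀ y ∈ UI, r x y ∈ Icc η (1 - η)) {t : ℝ} (ht : t ∈ Icc 0 1) :
    Ient r (interpKernel h r t) ≤ (1 - t) * Ient r h := by
  rw [Ient, Ient, ← integral_const_mul]
  simp only [← integral_const_mul]
  exact ((hh.interpKernel hr ht).bddKernel_relEnt hr hη hrη).setIntegral_setIntegral_mono
    ((hh.bddKernel_relEnt hr hη hrη).const_mul _) fun x hx y hy =>
      relEnt_convexComb_le (hh.2.2 x hx y hy) (Icc_subset_Ioo hη (by linarith) (hrη x hx y hy)) ht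

lemma psiRate_le_Ient (hh : IsGraphon h) (hη : 0 < η)
    (hrη : ∀ x ∈ UI, ∀ y ∈ UI, r x y ∈ Icc η (1 - η)) : psiRate r (gOpNorm h) ≤ Ient r h :=
  csInf_le ⟨0, fun _ ⟨_, hk, _, hc⟩ => hc ▸ Ient_nonneg hk hη hrη⟩ ⟨h, hh, rfl, rfl⟩

lemma two_mul_sq_sub_le_psiRate (hr : IsGraphon r) (hη : 0 < η)
    (hrη : ∀ x ∈ UI, ∀ y ∈ UI, r x y ∈ Icc η (1 - η)) {β : ℝ} (hβ : β ∈ Icc 0 1) :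
    2 * (β - gOpNorm r) ^ 2 ≤ psiRate r β := by
  obtain ⟨h, hh, hβh⟩ := exists_isGraphon_gOpNorm_eq hβ
  exact le_csInf ⟨_, h, hh, hβh, rfl⟩ fun _ ⟨k, hk, hβk, hc⟩ =>
    hc ▸ hβk ▸ two_mul_sq_gOpNorm_sub_le_Ient hk hr hη hrη

lemma psiRate_le_mul_psiRate (hr : IsGraphon r) (hη : 0 < η)
    (hrη : ∀ x ∈ UI, ∀ y ∈ UI, r x y ∈ Icc η (1 - η)) {a b : ℝ} (ha : a ∈ Icc 0 1)
    (hb : b ∈ uIcc a (gOpNorm r)) :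
    psiRate r b ≤ (1 - |b - a|) * psiRate r a := by
  have hb₀₁ : b ∈ Icc 0 1 :=
    uIcc_subset_Icc ha ⟨hr.bddKernel.gOpNorm_nonneg, hr.bddKernel.gOpNorm_le⟩ hb
  have hk : 0 ≤ 1 - |b - a| := sub_nonneg.mpr (abs_sub_le_iff.mpr
    ⟨by linarith [hb₀₁.2, ha.1], by linarith [hb₀₁.1, ha.2]⟩)
  obtain ⟨h₀, hh₀, hah₀⟩ := exists_isGraphon_gOpNorm_eq ha
  rw [← smul_eq_mul, psiRate, psiRate, ← Real.sInf_smul_of_nonneg hk]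
  refine le_csInf (Nonempty.smul_set ⟨_, h₀, hh₀, hah₀, rfl⟩) ?_
  rintro _ ⟨_, ⟨h, hh, rfl, rfl⟩, rfl⟩
  obtain ⟨t, ht, hbt, rfl⟩ := exists_gOpNorm_interpKernel_eq hh hr hb
  calc psiRate r (gOpNorm (interpKernel h r t)) ≤ Ient r (interpKernel h r t) :=
        psiRate_le_Ient (hh.interpKernel hr ht) hη hrη
    _ ≤ (1 - t) * Ient r h := Ient_interpKernel_le hh hr hη hrη ht
    _ ≤ _ := mul_le_mul_of_nonneg_right (by linarith) (Ient_nonneg hh hη hrη)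

lemma psiRate_lt_psiRate (hr : IsGraphon r) (hη : 0 < η)
    (hrη : ∀ x ∈ UI, ∀ y ∈ UI, r x y ∈ Icc η (1 - η)) {a b : ℝ} (ha : a ∈ Icc 0 1)
    (haC : a ≠ gOpNorm r) (hb : b ∈ uIcc a (gOpNorm r)) (hba : b ≠ a) :
    psiRate r b < psiRate r a := by
  have hgapC : 0 < 2 * (a - gOpNorm r) ^ 2 := by
    have := sub_ne_zero.mpr haC
    positivity
  have hpos : 0 < psiRate r a := hgapC.trans_le (two_mul_sq_sub_le_psiRate hr hη hrη ha)
  have hgap : 0 < |b - a| := abs_pos.mpr (sub_ne_zero.mpr hba)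
  nlinarith [psiRate_le_mul_psiRate hr hη hrη ha hb, mul_pos hgap hpos]

end RateFunction

/-- ψ_r is strictly decreasing on [0, C_r] and strictly increasing on [C_r, 1]. -/
theorem psi_strictAntiOn_strictMonoOn
    (r : ℝ → ℝ → ℝ) (η : ℝ) (hη : 0 < η)
    (hrmeas : Measurable (Function.uncurry r))
    (hrsymm : ∀ x y, r x y = r y x)
    (hrbound : ∀ x ∈ UI, ∀ y ∈ UI, r x y ∈ Set.Icc η (1 - η)) :
    StrictAntiOn (psiRate r) (Set.Icc 0 (gOpNorm r)) ∧
      StrictMonoOn (psiRate r) (Set.Icc (gOpNorm r) 1) := by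
  have hr : IsGraphon r := ⟨hrmeas, hrsymm, fun x hx y hy =>
    Icc_subset_Icc hη.le (by linarith) (hrbound x hx y hy)⟩
  have hC : gOpNorm r ∈ Icc 0 1 := ⟨hr.bddKernel.gOpNorm_nonneg, hr.bddKernel.gOpNorm_le⟩
  refine ⟨fun a ha b hb hab => ?_, fun a ha b hb hab => ?_⟩
  · exact psiRate_lt_psiRate hr hη hrbound ⟨ha.1, ha.2.trans hC.2⟩ (hab.trans_le hb.2).ne
      (mem_uIcc.mpr (.inl ⟨hab.le, hb.2⟩)) hab.ne'
  · exact psiRate_lt_psiRate hr hη hrbound ⟨hC.1.trans hb.1, hb.2⟩ (ha.1.trans_lt hab).ne'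
      (mem_uIcc.mpr (.inr ⟨ha.1, hab.le⟩)) hab.ne
end

section
/- Let r be a graphon with η ≤ r ≤ 1−η on [0,1]^2 for some η > 0, let B ⊆ [0,1]^2 be measurable, let α > 0, and let Δ:[0,1]^2→ℝ be bounded, measurable and symmetric. Then lim_{ε→0^+} ε^{−2α} ∫_B R(r(x,y)+ε^αΔ(x,y) | r(x,y)) dx dy = ∫_B Δ(x,y)^2/(2 r(x,y)(1−r(x,y))) dx dy. In particular, taking α = 1 and B = [0,1]^2, I_r(r+εΔ) = (1+o(1)) · 2ε^2 ∫_{[0,1]^2} Δ^2/(4r(1−r)) as ε→0. -/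
/-!
Write `R(b + t | b) = (b + t) log (1 + t / b) + (1 - b - t) log (1 - t / (1 - b))`. Since
`(1 + u) log (1 + u) = u + u² / 2 + O(u³)` for `|u| ≤ 1/2`, the linear terms cancel and
`R(b + t | b) = t² / (2 b (1 - b)) + O(|t|³ / η²)` uniformly for `η ≤ b ≤ 1 - η`, `|t| ≤ η / 2`.
With `t = δ Δ`, `|Δ| ≤ M`, the integrand is `δ² Δ² / (2 r (1 - r)) + O(δ³)`, so on a set of
finite measure `δ⁻² ∫ R(r + δ Δ | r) → ∫ Δ² / (2 r (1 - r))` as `δ → 0⁺`. Substituting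
`δ = ε ^ α` gives the first limit; `B = [0,1]²` and Fubini give the second.
-/

open MeasureTheory Real Filter Set Topology

lemma Real.abs_log_one_add_sub_le {u : ℝ} (hu : |u| ≤ 1 / 2) :
    |log (1 + u) - (u - u ^ 2 / 2)| ≤ 2 * |u| ^ 3 := by
  have h := Real.abs_log_sub_add_sum_range_le (show |-u| < 1 by rw [abs_neg]; linarith) 2
  have e : (∑ i ∈ Finset.range 2, (-u) ^ (i + 1) / (i + 1)) + log (1 - -u)
      = log (1 + u) - (u - u ^ 2 / 2) := by
    norm_num [Finset.sum_range_succ, sub_eq_add_neg]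
    ring
  rw [e, abs_neg] at h
  refine h.trans ?_
  rw [div_le_iff₀ (by norm_num; linarith)]
  norm_num
  nlinarith [pow_nonneg (abs_nonneg u) 3]

lemma Real.abs_one_add_mul_log_one_add_sub_le {u : ℝ} (hu : |u| ≤ 1 / 2) :
    |(1 + u) * log (1 + u) - (u + u ^ 2 / 2)| ≤ 4 * |u| ^ 3 := by
  have hlog := Real.abs_log_one_add_sub_le hu
  have h1u : |1 + u| ≤ 3 / 2 := (abs_add_le _ _).trans (by norm_num; linarith)
  calc |(1 + u) * log (1 + u) - (u + u ^ 2 / 2)|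
      = |(1 + u) * (log (1 + u) - (u - u ^ 2 / 2)) + (-(u ^ 3 / 2))| := by ring_nf
    _ ≤ 3 / 2 * (2 * |u| ^ 3) + |u| ^ 3 / 2 := by
      refine (abs_add_le _ _).trans (add_le_add ?_ (by simp [abs_div, abs_pow]))
      rw [abs_mul]
      exact mul_le_mul h1u hlog (abs_nonneg _) (by norm_num)
    _ ≤ 4 * |u| ^ 3 := by nlinarith [pow_nonneg (abs_nonneg u) 3]

lemma Real.abs_add_mul_log_div_sub_le {b t : ℝ} (hb : 0 < b) (ht : |t| ≤ b / 2) :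
    |(b + t) * log ((b + t) / b) - (t + t ^ 2 / (2 * b))| ≤ 4 * |t| ^ 3 / b ^ 2 := by
  have hu : |t / b| ≤ 1 / 2 := by
    rw [abs_div, abs_of_pos hb, div_le_iff₀ hb]; linarith
  have key := Real.abs_one_add_mul_log_one_add_sub_le hu
  have e : (b + t) * log ((b + t) / b) - (t + t ^ 2 / (2 * b))
      = b * ((1 + t / b) * log (1 + t / b) - (t / b + (t / b) ^ 2 / 2)) := by
    rw [show (b + t) / b = 1 + t / b by field_simp]
    field_simp
  rw [e, abs_mul, abs_of_pos hb]
  calc b * |(1 + t / b) * log (1 + t / b) - (t / b + (t / b) ^ 2 / 2)|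
      ≤ b * (4 * |t / b| ^ 3) := by gcongr
    _ = 4 * |t| ^ 3 / b ^ 2 := by
      rw [abs_div, abs_of_pos hb]; field_simp

lemma abs_relEnt_add_sub_le {η b t : ℝ} (hη : 0 < η) (hb : η ≤ b) (hb' : b ≤ 1 - η)
    (ht : |t| ≤ η / 2) :
    |relEnt (b + t) b - t ^ 2 / (2 * b * (1 - b))| ≤ 8 / η ^ 2 * |t| ^ 3 := by
  have hb0 : 0 < b := hη.trans_le hb
  have hb1 : 0 < 1 - b := by linarith
  have h₁ := Real.abs_add_mul_log_div_sub_le hb0 (t := t) (by linarith)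
  have h₂ := Real.abs_add_mul_log_div_sub_le hb1 (t := -t) (by rw [abs_neg]; linarith)
  have hcube (c : ℝ) (hc : η ≤ c) : 4 * |t| ^ 3 / c ^ 2 ≤ 4 / η ^ 2 * |t| ^ 3 := by
    rw [div_mul_eq_mul_div, mul_comm _ (|t| ^ 3)]
    gcongr
  have e : relEnt (b + t) b - t ^ 2 / (2 * b * (1 - b))
      = ((b + t) * log ((b + t) / b) - (t + t ^ 2 / (2 * b)))
        + ((1 - b + -t) * log ((1 - b + -t) / (1 - b)) - (-t + (-t) ^ 2 / (2 * (1 - b)))) := by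
    rw [relEnt, show 1 - (b + t) = 1 - b + -t by ring]
    field_simp
    ring
  rw [e]
  calc _ ≤ 4 * |t| ^ 3 / b ^ 2 + 4 * |-t| ^ 3 / (1 - b) ^ 2 :=
        (abs_add_le _ _).trans (add_le_add h₁ h₂)
    _ ≤ 4 / η ^ 2 * |t| ^ 3 + 4 / η ^ 2 * |t| ^ 3 := by
        rw [abs_neg]; exact add_le_add (hcube b hb) (hcube (1 - b) (by linarith))
    _ = 8 / η ^ 2 * |t| ^ 3 := by ring

lemma abs_relEnt_add_mul_sub_le {η b d δ M : ℝ} (hη : 0 < η) (hb : η ≤ b) (hb' : b ≤ 1 - η)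
    (hd : |d| ≤ M) (hδ : 0 ≤ δ) (hδM : δ * M ≤ η / 2) :
    |relEnt (b + δ * d) b - δ ^ 2 * (d ^ 2 / (2 * b * (1 - b)))| ≤ 8 / η ^ 2 * M ^ 3 * δ ^ 3 := by
  have ht : |δ * d| ≤ δ * M := by
    rw [abs_mul, abs_of_nonneg hδ]; exact mul_le_mul_of_nonneg_left hd hδ
  calc _ = |relEnt (b + δ * d) b - (δ * d) ^ 2 / (2 * b * (1 - b))| := by
        rw [mul_pow, mul_div_assoc]
    _ ≤ 8 / η ^ 2 * |δ * d| ^ 3 := abs_relEnt_add_sub_le hη hb hb' (ht.trans hδM)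
    _ ≤ 8 / η ^ 2 * (δ * M) ^ 3 := by gcongr
    _ = 8 / η ^ 2 * M ^ 3 * δ ^ 3 := by ring

lemma eventually_nhdsGT_zero_mul_lt (M : ℝ) {c : ℝ} (hc : 0 < c) :
    ∀ᶠ δ in 𝓝[>] (0 : ℝ), 0 < δ ∧ δ * M < c :=
  eventually_mem_nhdsWithin.and <| tendsto_nhdsWithin_of_tendsto_nhds
    ((continuous_mul_const M).tendsto' 0 0 (zero_mul M)) |>.eventually (gt_mem_nhds hc)

lemma tendsto_rpow_nhdsGT_zero {α : ℝ} (hα : 0 < α) :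
    Tendsto (fun ε : ℝ => ε ^ α) (𝓝[>] 0) (𝓝[>] 0) := by
  refine tendsto_nhdsWithin_of_tendsto_nhds_of_eventually_within _ ?_
    (eventually_nhdsWithin_of_forall fun ε (hε : 0 < ε) => rpow_pos_of_pos hε α)
  simpa [zero_rpow hα.ne'] using
    (continuousAt_rpow_const 0 α (Or.inr hα.le)).tendsto.mono_left nhdsWithin_le_nhds

section FiniteMeasure

variable {X : Type*} [MeasurableSpace X] {μ : Measure X} [IsFiniteMeasure μ]
  {a d : X → ℝ} {η M : ℝ}

lemma MeasureTheory.Integrable.of_abs_sub_le {f g : X → ℝ} {C : ℝ} (hg : Integrable g μ)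
    (hf : AEStronglyMeasurable f μ) (hfg : ∀ᵐ x ∂μ, |f x - g x| ≤ C) : Integrable f μ := by
  simpa using (Integrable.of_bound (hf.sub hg.1) C hfg).add hg

lemma tendsto_inv_sq_mul_integral_of_abs_sub_le {f : ℝ → X → ℝ} {g : X → ℝ} {C : ℝ}
    (hg : Integrable g μ)
    (hf : ∀ᶠ δ in 𝓝[>] 0, Integrable (f δ) μ ∧ ∀ᵐ x ∂μ, |f δ x - δ ^ 2 * g x| ≤ C * δ ^ 3) :
    Tendsto (fun δ => (δ ^ 2)⁻¹ * ∫ x, f δ x ∂μ) (𝓝[>] 0) (𝓝 (∫ x, g x ∂μ)) := by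
  rw [← tendsto_sub_nhds_zero_iff]
  refine squeeze_zero_norm' ?_ (tendsto_nhdsWithin_of_tendsto_nhds
    ((continuous_const_mul (C * μ.real univ)).tendsto' 0 0 (mul_zero _)))
  filter_upwards [hf, self_mem_nhdsWithin] with δ ⟨hfδ, hbound⟩ (hδ : 0 < δ)
  have hnorm : ‖∫ x, f δ x ∂μ - δ ^ 2 * ∫ x, g x ∂μ‖ ≤ C * δ ^ 3 * μ.real univ := by
    rw [← integral_const_mul, ← integral_sub hfδ (hg.const_mul _)]
    exact norm_integral_le_of_norm_le_const (f := fun x => f δ x - δ ^ 2 * g x) hbound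
  calc ‖(δ ^ 2)⁻¹ * ∫ x, f δ x ∂μ - ∫ x, g x ∂μ‖
      = ‖(δ ^ 2)⁻¹ * (∫ x, f δ x ∂μ - δ ^ 2 * ∫ x, g x ∂μ)‖ := by
        rw [mul_sub, inv_mul_cancel_left₀ (pow_pos hδ 2).ne']
    _ ≤ (δ ^ 2)⁻¹ * (C * δ ^ 3 * μ.real univ) := by
        rw [norm_mul, norm_of_nonneg (by positivity)]
        gcongr
    _ = C * μ.real univ * δ := by field_simp

lemma integrable_sq_div_mul_one_sub (hη : 0 < η) (ha : Measurable a) (hd : Measurable d)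
    (ha_mem : ∀ᵐ x ∂μ, a x ∈ Icc η (1 - η)) (hdM : ∀ x, |d x| ≤ M) :
    Integrable (fun x => d x ^ 2 / (2 * a x * (1 - a x))) μ := by
  refine Integrable.of_bound (by fun_prop : Measurable _).aestronglyMeasurable
    (M ^ 2 / (2 * η ^ 2)) ?_
  filter_upwards [ha_mem] with x ⟨hx, hx'⟩
  rw [norm_of_nonneg (div_nonneg (sq_nonneg _) (by nlinarith))]
  exact div_le_div₀ (sq_nonneg M) (sq_le_sq' (abs_le.1 (hdM x)).1 (abs_le.1 (hdM x)).2)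
    (by positivity) (by nlinarith)

lemma integrable_relEnt_add_mul (hη : 0 < η) (ha : Measurable a) (hd : Measurable d)
    (ha_mem : ∀ᵐ x ∂μ, a x ∈ Icc η (1 - η)) (hdM : ∀ x, |d x| ≤ M)
    {δ : ℝ} (hδ : 0 ≤ δ) (hδM : δ * M ≤ η / 2) :
    Integrable (fun x => relEnt (a x + δ * d x) (a x)) μ := by
  refine ((integrable_sq_div_mul_one_sub hη ha hd ha_mem hdM).const_mul (δ ^ 2)).of_abs_sub_le
    (C := 8 / η ^ 2 * M ^ 3 * δ ^ 3) (by unfold relEnt; fun_prop) ?_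
  filter_upwards [ha_mem] with x ⟨hx, hx'⟩
  exact abs_relEnt_add_mul_sub_le hη hx hx' (hdM x) hδ hδM

lemma tendsto_inv_sq_mul_integral_relEnt_add_mul (hη : 0 < η) (ha : Measurable a)
    (hd : Measurable d) (ha_mem : ∀ᵐ x ∂μ, a x ∈ Icc η (1 - η)) (hdM : ∀ x, |d x| ≤ M) :
    Tendsto (fun δ => (δ ^ 2)⁻¹ * ∫ x, relEnt (a x + δ * d x) (a x) ∂μ) (𝓝[>] 0)
      (𝓝 (∫ x, d x ^ 2 / (2 * a x * (1 - a x)) ∂μ)) := by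
  refine tendsto_inv_sq_mul_integral_of_abs_sub_le (C := 8 / η ^ 2 * M ^ 3)
    (integrable_sq_div_mul_one_sub hη ha hd ha_mem hdM) ?_
  filter_upwards [eventually_nhdsGT_zero_mul_lt M (half_pos hη)] with δ ⟨hδ, hδM⟩
  refine ⟨integrable_relEnt_add_mul hη ha hd ha_mem hdM hδ.le hδM.le, ?_⟩
  filter_upwards [ha_mem] with x ⟨hx, hx'⟩
  exact abs_relEnt_add_mul_sub_le hη hx hx' (hdM x) hδ.le hδM.le

end FiniteMeasure

section Graphon

variable {r Δ : ℝ → ℝ → ℝ} {η M : ℝ}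

lemma volume_UI_prod_ne_top : volume (UI ×ˢ UI) ≠ ⊤ :=
  (isCompact_Icc.prod isCompact_Icc).measure_ne_top

instance : IsFiniteMeasure (volume.restrict (UI ×ˢ UI)) :=
  isFiniteMeasure_restrict.2 volume_UI_prod_ne_top

lemma setIntegral_UI_prod {f : ℝ × ℝ → ℝ} (hf : IntegrableOn f (UI ×ˢ UI)) :
    ∫ p in UI ×ˢ UI, f p = ∫ x in UI, ∫ y in UI, f (x, y) := by
  rw [Measure.volume_eq_prod] at hf ⊢
  exact setIntegral_prod f hf

lemma ae_restrict_mem_Icc (hrbound : ∀ x ∈ UI, ∀ y ∈ UI, r x y ∈ Icc η (1 - η))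
    {B : Set (ℝ × ℝ)} (hBsub : B ⊆ UI ×ˢ UI) :
    ∀ᵐ p ∂volume.restrict B, r p.1 p.2 ∈ Icc η (1 - η) :=
  ae_restrict_of_ae_restrict_of_subset hBsub <|
    (ae_restrict_mem (measurableSet_Icc.prod measurableSet_Icc)).mono
      fun _ hp => hrbound _ hp.1 _ hp.2

lemma tendsto_inv_sq_mul_setIntegral_relEnt (hη : 0 < η)
    (hrmeas : Measurable (Function.uncurry r))
    (hrbound : ∀ x ∈ UI, ∀ y ∈ UI, r x y ∈ Icc η (1 - η))
    (hΔmeas : Measurable (Function.uncurry Δ)) (hΔbdd : ∀ x y, |Δ x y| ≤ M)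
    {B : Set (ℝ × ℝ)} (hBsub : B ⊆ UI ×ˢ UI) :
    Tendsto (fun δ => (δ ^ 2)⁻¹ * ∫ p in B, relEnt (r p.1 p.2 + δ * Δ p.1 p.2) (r p.1 p.2))
      (𝓝[>] 0) (𝓝 (∫ p in B, Δ p.1 p.2 ^ 2 / (2 * r p.1 p.2 * (1 - r p.1 p.2)))) := by
  have : IsFiniteMeasure (volume.restrict B) :=
    isFiniteMeasure_restrict.2 (ne_top_of_le_ne_top volume_UI_prod_ne_top (measure_mono hBsub))
  exact tendsto_inv_sq_mul_integral_relEnt_add_mul hη hrmeas hΔmeas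
    (ae_restrict_mem_Icc hrbound hBsub) fun _ => hΔbdd _ _

lemma Ient_add_mul_eq_setIntegral (hη : 0 < η)
    (hrmeas : Measurable (Function.uncurry r))
    (hrbound : ∀ x ∈ UI, ∀ y ∈ UI, r x y ∈ Icc η (1 - η))
    (hΔmeas : Measurable (Function.uncurry Δ)) (hΔbdd : ∀ x y, |Δ x y| ≤ M)
    {ε : ℝ} (hε : 0 ≤ ε) (hεM : ε * M ≤ η / 2) :
    Ient r (fun x y => r x y + ε * Δ x y)
      = ∫ p in UI ×ˢ UI, relEnt (r p.1 p.2 + ε * Δ p.1 p.2) (r p.1 p.2) :=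
  (setIntegral_UI_prod (integrable_relEnt_add_mul hη hrmeas hΔmeas
    (ae_restrict_mem_Icc hrbound subset_rfl) (fun _ => hΔbdd _ _) hε hεM)).symm

lemma setIntegral_UI_prod_sq_div_eq_two_mul (hη : 0 < η)
    (hrmeas : Measurable (Function.uncurry r))
    (hrbound : ∀ x ∈ UI, ∀ y ∈ UI, r x y ∈ Icc η (1 - η))
    (hΔmeas : Measurable (Function.uncurry Δ)) (hΔbdd : ∀ x y, |Δ x y| ≤ M) :
    ∫ p in UI ×ˢ UI, Δ p.1 p.2 ^ 2 / (2 * r p.1 p.2 * (1 - r p.1 p.2))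
      = 2 * ∫ x in UI, ∫ y in UI, Δ x y ^ 2 / (4 * r x y * (1 - r x y)) := by
  have htwo (x y : ℝ) : Δ x y ^ 2 / (2 * r x y * (1 - r x y))
      = 2 * (Δ x y ^ 2 / (4 * r x y * (1 - r x y))) := by
    -- `ring` treats `(2 * r * (1 - r))⁻¹` as an atom unless `r * (1 - r)` is one
    simp only [mul_assoc]
    generalize r x y * (1 - r x y) = c
    ring
  refine (setIntegral_UI_prod (integrable_sq_div_mul_one_sub hη hrmeas hΔmeas
    (ae_restrict_mem_Icc hrbound subset_rfl) fun _ => hΔbdd _ _)).trans ?_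
  simp only [Function.uncurry_apply_pair, htwo, integral_const_mul]

end Graphon

theorem cost_of_small_perturbations_general
    (r : ℝ → ℝ → ℝ) (η : ℝ) (hη : 0 < η)
    (hrmeas : Measurable (Function.uncurry r))
    (hrbound : ∀ x ∈ UI, ∀ y ∈ UI, r x y ∈ Set.Icc η (1 - η))
    (B : Set (ℝ × ℝ)) (hBsub : B ⊆ UI ×ˢ UI)
    (α : ℝ) (hα : 0 < α)
    (Δ : ℝ → ℝ → ℝ)
    (hΔmeas : Measurable (Function.uncurry Δ))
    (M : ℝ) (hΔbdd : ∀ x y, |Δ x y| ≤ M) :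
    Filter.Tendsto
      (fun ε : ℝ => (ε ^ (2 * α))⁻¹ *
        ∫ p in B, relEnt (r p.1 p.2 + ε ^ α * Δ p.1 p.2) (r p.1 p.2))
      (nhdsWithin 0 (Set.Ioi 0))
      (nhds (∫ p in B, (Δ p.1 p.2) ^ 2 / (2 * r p.1 p.2 * (1 - r p.1 p.2)))) ∧
    Filter.Tendsto
      (fun ε : ℝ => (ε ^ 2)⁻¹ * Ient r (fun x y => r x y + ε * Δ x y))
      (nhdsWithin 0 (Set.Ioi 0))
      (nhds (2 * ∫ x in UI, ∫ y in UI, (Δ x y) ^ 2 / (4 * r x y * (1 - r x y)))) := by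
  have hlim {B : Set (ℝ × ℝ)} (hBsub : B ⊆ UI ×ˢ UI) :=
    tendsto_inv_sq_mul_setIntegral_relEnt hη hrmeas hrbound hΔmeas hΔbdd hBsub
  constructor
  · refine ((hlim hBsub).comp (tendsto_rpow_nhdsGT_zero hα)).congr' ?_
    filter_upwards [self_mem_nhdsWithin] with ε (hε : 0 < ε)
    rw [Function.comp_apply, ← rpow_natCast, ← rpow_mul hε.le, Nat.cast_ofNat, mul_comm α]
  · rw [← setIntegral_UI_prod_sq_div_eq_two_mul hη hrmeas hrbound hΔmeas hΔbdd]
    refine (hlim subset_rfl).congr' ?_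
    filter_upwards [eventually_nhdsGT_zero_mul_lt M (half_pos hη)] with ε ⟨hε, hεM⟩
    rw [Ient_add_mul_eq_setIntegral hη hrmeas hrbound hΔmeas hΔbdd hε.le hεM.le]

/-- cost of a small perturbation ε^α·Δ on a region B, and the special case
α = 1, B = [0,1]². -/
theorem cost_of_small_perturbations
    (r : ℝ → ℝ → ℝ) (η : ℝ) (hη : 0 < η)
    (hrmeas : Measurable (Function.uncurry r))
    (hrsymm : ∀ x y, r x y = r y x)
    (hrbound : ∀ x ∈ UI, ∀ y ∈ UI, r x y ∈ Set.Icc η (1 - η))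
    (B : Set (ℝ × ℝ)) (hB : MeasurableSet B) (hBsub : B ⊆ UI ×ˢ UI)
    (α : ℝ) (hα : 0 < α)
    (Δ : ℝ → ℝ → ℝ)
    (hΔmeas : Measurable (Function.uncurry Δ))
    (hΔsymm : ∀ x y, Δ x y = Δ y x)
    (M : ℝ) (hΔbdd : ∀ x y, |Δ x y| ≤ M) :
    Filter.Tendsto
      (fun ε : ℝ => (ε ^ (2 * α))⁻¹ *
        ∫ p in B, relEnt (r p.1 p.2 + ε ^ α * Δ p.1 p.2) (r p.1 p.2))
      (nhdsWithin 0 (Set.Ioi 0))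
      (nhds (∫ p in B, (Δ p.1 p.2) ^ 2 / (2 * r p.1 p.2 * (1 - r p.1 p.2)))) ∧
    Filter.Tendsto
      (fun ε : ℝ => (ε ^ 2)⁻¹ * Ient r (fun x y => r x y + ε * Δ x y))
      (nhdsWithin 0 (Set.Ioi 0))
      (nhds (2 * ∫ x in UI, ∫ y in UI, (Δ x y) ^ 2 / (4 * r x y * (1 - r x y)))) :=
  cost_of_small_perturbations_general r η hη hrmeas hrbound B hBsub α hα Δ hΔmeas M hΔbdd
end

section
/- Let r be a graphon with η ≤ r ≤ 1−η on [0,1]^2 for some η > 0 and let f be any graphon. For N ∈ ℕ let B_i = [(i−1)/N, i/N) for 1 ≤ i ≤ N−1 and B_N = [(N−1)/N, 1], and define the block graphons f_N and r_N by f_N(x,y) = N^2 ∫_{B_i×B_j} f for (x,y) ∈ B_i×B_j, and similarly for r_N. Then lim_{N→∞} I_{r_N}(f_N) = I_r(f). -/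
/-!
By the Lebesgue differentiation theorem (the blocks are closed balls of the sup metric on `ℝ × ℝ`
that shrink to every point of the unit square) the block averages `f_N`, `r_N` converge to `f`, `r`
almost everywhere. Block averages of `r` stay in `[η, 1 - η]`, where `(a, b) ↦ R(a | b)` is
continuous and bounded by `log 2 + |log η|`, so dominated convergence gives `I_{r_N}(f_N) → I_r(f)`.
-/

open MeasureTheory Real Filter Set Topology

noncomputable section

/-- The index i ∈ {0, …, N−1} of the block B_{i+1} = [i/N, (i+1)/N) containing x
(the last block also contains 1). -/
def blockIdx (N : ℕ) (x : ℝ) : ℕ := min (Nat.floor ((N : ℝ) * x)) (N - 1)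

/-- The block average (step-function approximation) of a kernel f with N² blocks. -/
def blockAvg (N : ℕ) (f : ℝ → ℝ → ℝ) : ℝ → ℝ → ℝ := fun x y =>
  (N : ℝ) ^ 2 *
    ∫ u in Set.Ico ((blockIdx N x : ℝ) / N) (((blockIdx N x : ℝ) + 1) / N),
      ∫ v in Set.Ico ((blockIdx N y : ℝ) / N) (((blockIdx N y : ℝ) + 1) / N), f u v

end

namespace BlockGraphon

variable {N : ℕ}

lemma blockIdx_lt (hN : 0 < N) (x : ℝ) : blockIdx N x < N :=
  (min_le_right _ _).trans_lt (Nat.sub_lt hN one_pos)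

lemma measurable_blockIdx (N : ℕ) : Measurable (blockIdx N) :=
  (Nat.measurable_floor.comp (measurable_const.mul measurable_id)).min measurable_const

/-- The block of `x`, taken closed so that it is a closed ball and contains `x` also when `x = 1`;
closing the half-open blocks of `blockAvg` changes no integral. -/
def blockCell (N : ℕ) (x : ℝ) : Set ℝ :=
  Icc ((blockIdx N x : ℝ) / N) (((blockIdx N x : ℝ) + 1) / N)

lemma blockCell_subset_UI (hN : 0 < N) (x : ℝ) : blockCell N x ⊆ UI := by
  have hN' : (0 : ℝ) < N := by exact_mod_cast hN
  have hi : (blockIdx N x : ℝ) + 1 ≤ N := by exact_mod_cast blockIdx_lt hN x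
  exact Icc_subset_Icc (by positivity) ((div_le_one hN').2 hi)

lemma mem_blockCell (hN : 0 < N) {x : ℝ} (hx : x ∈ UI) : x ∈ blockCell N x := by
  have hN' : (0 : ℝ) < N := by exact_mod_cast hN
  have hNx : 0 ≤ (N : ℝ) * x := mul_nonneg hN'.le hx.1
  refine ⟨(div_le_iff₀ hN').2 ?_, (le_div_iff₀ hN').2 ?_⟩
  · calc (blockIdx N x : ℝ) ≤ ⌊(N : ℝ) * x⌋₊ := by exact_mod_cast min_le_left _ _
      _ ≤ N * x := Nat.floor_le hNx
      _ = x * N := mul_comm _ _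
  · rcases min_choice ⌊(N : ℝ) * x⌋₊ (N - 1) with h | h <;>
      simp only [blockIdx, h]
    · rw [mul_comm]; exact (Nat.lt_floor_add_one _).le
    · rw [Nat.cast_sub hN, Nat.cast_one, sub_add_cancel]; nlinarith [hx.2]

lemma blockCell_eq_closedBall (hN : 0 < N) (x : ℝ) :
    blockCell N x = Metric.closedBall (((blockIdx N x : ℝ) + 2⁻¹) / N) (1 / (2 * N)) := by
  have hN' : (N : ℝ) ≠ 0 := by positivity
  rw [Real.closedBall_eq_Icc, blockCell]
  congr 1 <;> field_simp <;> ring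

lemma volume_blockCell (x : ℝ) : volume (blockCell N x) = ENNReal.ofReal (1 / N) := by
  rw [blockCell, Real.volume_Icc, ← sub_div, add_sub_cancel_left]

lemma measurable_uncurry_blockAvg (N : ℕ) (g : ℝ → ℝ → ℝ) :
    Measurable (Function.uncurry (blockAvg N g)) := by
  have hfactor : Function.uncurry (blockAvg N g) =
      (fun q : ℕ × ℕ => (N : ℝ) ^ 2 *
        ∫ u in Ico ((q.1 : ℝ) / N) (((q.1 : ℝ) + 1) / N),
          ∫ v in Ico ((q.2 : ℝ) / N) (((q.2 : ℝ) + 1) / N), g u v) ∘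
      (fun p : ℝ × ℝ => (blockIdx N p.1, blockIdx N p.2)) := rfl
  rw [hfactor]
  exact (measurable_of_countable _).comp
    (((measurable_blockIdx N).comp measurable_fst).prodMk
      ((measurable_blockIdx N).comp measurable_snd))

lemma measurableSet_UI_prod_UI : MeasurableSet (UI ×ˢ UI) :=
  measurableSet_Icc.prod measurableSet_Icc

lemma volume_UI_prod_UI : volume (UI ×ˢ UI) = 1 := by
  rw [Measure.volume_eq_prod, Measure.prod_prod]
  simp [UI]

instance : IsFiniteMeasure (volume.restrict (UI ×ˢ UI)) :=
  isFiniteMeasure_restrict.2 (by simp [volume_UI_prod_UI])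

lemma integrableOn_UI_prod_UI {g : ℝ → ℝ → ℝ} (hm : Measurable (Function.uncurry g)) {lo hi : ℝ}
    (hb : ∀ x ∈ UI, ∀ y ∈ UI, g x y ∈ Icc lo hi) :
    IntegrableOn (Function.uncurry g) (UI ×ˢ UI) := by
  refine Integrable.of_bound hm.aestronglyMeasurable (max |lo| |hi|) ?_
  filter_upwards [ae_restrict_mem measurableSet_UI_prod_UI] with p hp
  exact abs_le_max_abs_abs (hb p.1 hp.1 p.2 hp.2).1 (hb p.1 hp.1 p.2 hp.2).2

lemma blockAvg_eq_setAverage {g : ℝ → ℝ → ℝ} (hg : IntegrableOn (Function.uncurry g) (UI ×ˢ UI))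
    (hN : 0 < N) (x y : ℝ) :
    blockAvg N g x y = ⨍ q in blockCell N x ×ˢ blockCell N y, Function.uncurry g q := by
  have hcell : blockCell N x ×ˢ blockCell N y ⊆ UI ×ˢ UI :=
    prod_mono (blockCell_subset_UI hN x) (blockCell_subset_UI hN y)
  rw [setAverage_eq, Measure.volume_eq_prod, setIntegral_prod _ (hg.mono_set hcell),
    measureReal_def, Measure.prod_prod, volume_blockCell, volume_blockCell,
    ← ENNReal.ofReal_mul (by positivity), ENNReal.toReal_ofReal (by positivity), smul_eq_mul,
    blockAvg, blockCell, blockCell, integral_Icc_eq_integral_Ico]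
  simp_rw [integral_Icc_eq_integral_Ico]
  field_simp
  rfl

lemma blockAvg_mem_Icc {g : ℝ → ℝ → ℝ} (hg : IntegrableOn (Function.uncurry g) (UI ×ˢ UI))
    {lo hi : ℝ} (hb : ∀ x ∈ UI, ∀ y ∈ UI, g x y ∈ Icc lo hi) (hN : 0 < N) (x y : ℝ) :
    blockAvg N g x y ∈ Icc lo hi := by
  have hcell : blockCell N x ×ˢ blockCell N y ⊆ UI ×ˢ UI :=
    prod_mono (blockCell_subset_UI hN x) (blockCell_subset_UI hN y)
  have hvol : volume (blockCell N x ×ˢ blockCell N y) =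
      ENNReal.ofReal (1 / N) * ENNReal.ofReal (1 / N) := by
    rw [Measure.volume_eq_prod, Measure.prod_prod, volume_blockCell, volume_blockCell]
  rw [blockAvg_eq_setAverage hg hN]
  refine convex_Icc lo hi |>.set_average_mem isClosed_Icc ?_ ?_ ?_ (hg.mono_set hcell)
  · rw [hvol]; simpa using hN.ne'
  · rw [hvol]; exact ENNReal.mul_ne_top ENNReal.ofReal_ne_top ENNReal.ofReal_ne_top
  · filter_upwards [ae_restrict_mem (measurableSet_Icc.prod measurableSet_Icc)] with q hq
    exact hb q.1 (hcell hq).1 q.2 (hcell hq).2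

lemma ae_tendsto_blockAvg {g : ℝ → ℝ → ℝ} (hg : IntegrableOn (Function.uncurry g) (UI ×ˢ UI)) :
    ∀ᵐ p : ℝ × ℝ, p ∈ UI ×ˢ UI →
      Tendsto (fun N : ℕ => blockAvg N g p.1 p.2) atTop (𝓝 (g p.1 p.2)) := by
  set G := (UI ×ˢ UI).indicator (Function.uncurry g)
  have hG : LocallyIntegrable G :=
    ((integrable_indicator_iff measurableSet_UI_prod_UI).2 hg).locallyIntegrable
  filter_upwards [IsUnifLocDoublingMeasure.ae_tendsto_average volume hG 1] with p hlim hp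
  let center (N : ℕ) : ℝ × ℝ :=
    (((blockIdx N p.1 : ℝ) + 2⁻¹) / N, ((blockIdx N p.2 : ℝ) + 2⁻¹) / N)
  have hball : ∀ N, 0 < N →
      Metric.closedBall (center N) (1 / (2 * N)) = blockCell N p.1 ×ˢ blockCell N p.2 := by
    intro N hN
    rw [← closedBall_prod_same, blockCell_eq_closedBall hN, blockCell_eq_closedBall hN]
  have hradius : Tendsto (fun N : ℕ => 1 / (2 * (N : ℝ))) atTop (𝓝[>] 0) := by
    refine tendsto_nhdsWithin_iff.2 ⟨?_, ?_⟩
    · exact (tendsto_const_div_atTop_nhds_zero_nat (1 / 2)).congr fun N => div_div _ _ _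
    · filter_upwards [eventually_gt_atTop 0] with N hN
      exact mem_Ioi.2 (by positivity)
  have hmem : ∀ᶠ N : ℕ in atTop, p ∈ Metric.closedBall (center N) (1 * (1 / (2 * N))) := by
    filter_upwards [eventually_gt_atTop 0] with N hN
    rw [one_mul, hball N hN]
    exact ⟨mem_blockCell hN hp.1, mem_blockCell hN hp.2⟩
  rw [show g p.1 p.2 = G p from (indicator_of_mem hp (Function.uncurry g)).symm]
  refine (hlim center _ hradius hmem).congr' ?_
  filter_upwards [eventually_gt_atTop 0] with N hN
  rw [hball N hN, blockAvg_eq_setAverage hg hN]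
  refine setAverage_congr_fun (measurableSet_Icc.prod measurableSet_Icc) (ae_of_all _ ?_)
  intro q hq
  exact indicator_of_mem (prod_mono (blockCell_subset_UI hN _) (blockCell_subset_UI hN _) hq) _

section RelativeEntropy

variable {a b η : ℝ}

lemma relEnt_eq_neg_binEntropy (hb : b ∈ Ioo 0 1) :
    relEnt a b = -binEntropy a - (a * log b + (1 - a) * log (1 - b)) := by
  have hb1 : 1 - b ≠ 0 := by linarith [hb.2]
  have hlog (c d : ℝ) (hd : d ≠ 0) : c * log (c / d) = c * log c - c * log d := by
    rcases eq_or_ne c 0 with rfl | hc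
    · simp
    · rw [log_div hc hd, mul_sub]
  rw [relEnt, binEntropy, hlog a b hb.1.ne', hlog (1 - a) (1 - b) hb1, log_inv, log_inv]
  ring

lemma relEnt_mem_Icc (ha : a ∈ Icc 0 1) (hb : b ∈ Icc η (1 - η)) (hη : 0 < η) :
    relEnt a b ∈ Icc (-log 2) (-log η) := by
  have hb0 : 0 < b := hη.trans_le hb.1
  have hb1 : 0 < 1 - b := by linarith [hb.2]
  have hlogb : log η ≤ log b := log_le_log hη hb.1
  have hlogb1 : log η ≤ log (1 - b) := log_le_log hη (by linarith [hb.2])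
  have hlogb' : log b ≤ 0 := log_nonpos hb0.le (by linarith)
  have hlogb1' : log (1 - b) ≤ 0 := log_nonpos hb1.le (by linarith)
  rw [relEnt_eq_neg_binEntropy ⟨hb0, by linarith⟩]
  have h0 := binEntropy_nonneg ha.1 ha.2
  have h2 := binEntropy_le_log_two (p := a)
  constructor <;> nlinarith [ha.1, ha.2]

lemma continuousAt_relEnt (hb : b ∈ Ioo 0 1) :
    ContinuousAt (Function.uncurry relEnt) (a, b) := by
  have hb0 : b ≠ 0 := hb.1.ne'
  have hb1 : 1 - b ≠ 0 := by linarith [hb.2]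
  have := binEntropy_continuous
  have hcont : ContinuousAt
      (fun q : ℝ × ℝ => -binEntropy q.1 - (q.1 * log q.2 + (1 - q.1) * log (1 - q.2))) (a, b) := by
    fun_prop (disch := assumption)
  refine hcont.congr ?_
  filter_upwards [(isOpen_Ioo.preimage continuous_snd).mem_nhds hb] with q hq
  exact (relEnt_eq_neg_binEntropy hq).symm

lemma measurable_relEnt : Measurable (Function.uncurry relEnt) := by
  unfold relEnt
  fun_prop

end RelativeEntropy

lemma tendsto_integral_relEnt {α : Type*} [MeasurableSpace α] {μ : Measure α} [IsFiniteMeasure μ]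
    {η : ℝ} (hη : 0 < η) {F R : ℕ → α → ℝ} {f r : α → ℝ}
    (hFm : ∀ n, Measurable (F n)) (hRm : ∀ n, Measurable (R n))
    (hF : ∀ᶠ n in atTop, ∀ᵐ x ∂μ, F n x ∈ Icc 0 1)
    (hR : ∀ᶠ n in atTop, ∀ᵐ x ∂μ, R n x ∈ Icc η (1 - η))
    (hr : ∀ᵐ x ∂μ, r x ∈ Ioo 0 1)
    (hFf : ∀ᵐ x ∂μ, Tendsto (F · x) atTop (𝓝 (f x)))
    (hRr : ∀ᵐ x ∂μ, Tendsto (R · x) atTop (𝓝 (r x))) :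
    Tendsto (fun n => ∫ x, relEnt (F n x) (R n x) ∂μ) atTop (𝓝 (∫ x, relEnt (f x) (r x) ∂μ)) := by
  refine tendsto_integral_filter_of_dominated_convergence (fun _ => log 2 + |log η|)
    (Eventually.of_forall fun n =>
      (measurable_relEnt.comp ((hFm n).prodMk (hRm n))).aestronglyMeasurable)
    ?_ (integrable_const _) ?_
  · filter_upwards [hF, hR] with n hFn hRn
    filter_upwards [hFn, hRn] with x hFx hRx
    have hmem := relEnt_mem_Icc hFx hRx hη
    have hlog2 : 0 ≤ log 2 := log_nonneg one_le_two
    rw [norm_eq_abs, abs_le]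
    constructor <;> linarith [hmem.1, hmem.2, neg_abs_le (log η), abs_nonneg (log η)]
  · filter_upwards [hr, hFf, hRr] with x hrx hFx hRx
    exact (continuousAt_relEnt hrx).tendsto.comp (hFx.prodMk_nhds hRx)

lemma Ient_eq_setIntegral {r h : ℝ → ℝ → ℝ} {η : ℝ} (hη : 0 < η)
    (hr : Measurable (Function.uncurry r)) (hh : Measurable (Function.uncurry h))
    (hrb : ∀ x ∈ UI, ∀ y ∈ UI, r x y ∈ Icc η (1 - η))
    (hhb : ∀ x ∈ UI, ∀ y ∈ UI, h x y ∈ Icc 0 1) :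
    Ient r h = ∫ p in UI ×ˢ UI, relEnt (h p.1 p.2) (r p.1 p.2) := by
  have hint := integrableOn_UI_prod_UI (g := fun x y => relEnt (h x y) (r x y))
    (measurable_relEnt.comp (hh.prodMk hr))
    fun x hx y hy => relEnt_mem_Icc (hhb x hx y hy) (hrb x hx y hy) hη
  rw [Measure.volume_eq_prod] at hint ⊢
  exact (setIntegral_prod _ hint).symm

end BlockGraphon

open BlockGraphon in
theorem blockGraphon_cost_convergence_general
    (r : ℝ → ℝ → ℝ) (η : ℝ) (hη : 0 < η)
    (hrmeas : Measurable (Function.uncurry r))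
    (hrbound : ∀ x ∈ UI, ∀ y ∈ UI, r x y ∈ Set.Icc η (1 - η))
    (f : ℝ → ℝ → ℝ) (hf : IsGraphon f) :
    Filter.Tendsto (fun N : ℕ => Ient (blockAvg N r) (blockAvg N f))
      Filter.atTop (nhds (Ient r f)) := by
  obtain ⟨hfmeas, -, hfbound⟩ := hf
  have hrint := integrableOn_UI_prod_UI hrmeas hrbound
  have hfint := integrableOn_UI_prod_UI hfmeas hfbound
  have hUI := measurableSet_UI_prod_UI
  have hblock : ∀ᶠ N in atTop, (∀ x ∈ UI, ∀ y ∈ UI, blockAvg N r x y ∈ Icc η (1 - η)) ∧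
      ∀ x ∈ UI, ∀ y ∈ UI, blockAvg N f x y ∈ Icc 0 1 :=
    (eventually_gt_atTop 0).mono fun N hN => ⟨fun x _ y _ => blockAvg_mem_Icc hrint hrbound hN x y,
      fun x _ y _ => blockAvg_mem_Icc hfint hfbound hN x y⟩
  have hr01 : ∀ᵐ p ∂volume.restrict (UI ×ˢ UI), r p.1 p.2 ∈ Ioo 0 1 :=
    ae_restrict_of_forall_mem hUI fun p hp =>
      ⟨hη.trans_le (hrbound p.1 hp.1 p.2 hp.2).1,
        (hrbound p.1 hp.1 p.2 hp.2).2.trans_lt (sub_lt_self 1 hη)⟩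
  rw [Ient_eq_setIntegral hη hrmeas hfmeas hrbound hfbound]
  refine (tendsto_integral_relEnt hη (fun N => measurable_uncurry_blockAvg N f)
    (fun N => measurable_uncurry_blockAvg N r)
    (hblock.mono fun N hN => ae_restrict_of_forall_mem hUI fun p hp => hN.2 p.1 hp.1 p.2 hp.2)
    (hblock.mono fun N hN => ae_restrict_of_forall_mem hUI fun p hp => hN.1 p.1 hp.1 p.2 hp.2)
    hr01 ((ae_restrict_iff' hUI).2 (ae_tendsto_blockAvg hfint))
    ((ae_restrict_iff' hUI).2 (ae_tendsto_blockAvg hrint))).congr' ?_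
  filter_upwards [hblock] with N hN
  exact (Ient_eq_setIntegral hη (measurable_uncurry_blockAvg N r) (measurable_uncurry_blockAvg N f)
    hN.1 hN.2).symm

/-- convergence of the cost function along block graphon approximations:
I_{r_N}(f_N) → I_r(f). -/
theorem blockGraphon_cost_convergence
    (r : ℝ → ℝ → ℝ) (η : ℝ) (hη : 0 < η)
    (hrmeas : Measurable (Function.uncurry r))
    (hrsymm : ∀ x y, r x y = r y x)
    (hrbound : ∀ x ∈ UI, ∀ y ∈ UI, r x y ∈ Set.Icc η (1 - η))
    (f : ℝ → ℝ → ℝ) (hf : IsGraphon f) :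
    Filter.Tendsto (fun N : ℕ => Ient (blockAvg N r) (blockAvg N f))
      Filter.atTop (nhds (Ient r f)) :=
  blockGraphon_cost_convergence_general r η hη hrmeas hrbound f hf
end

section
/- Let r be a graphon with η ≤ r ≤ 1−η on [0,1]^2 for some η > 0, let C > 0, and set B_r = ∫_{[0,1]^2} r^3(1−r). Then the infimum of ∫_{[0,1]^2} Δ^2/(2r(1−r)) over all symmetric Δ ∈ L^2([0,1]^2) satisfying ∫_{[0,1]^2} rΔ = C equals C^2/(2B_r), and it is attained uniquely (up to a.e. equality) at Δ*(x,y) = (C/B_r) · r(x,y)^2 (1−r(x,y)). -/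
open MeasureTheory Real Filter Set Topology

/-!
Completing the square in the weighted space `L²(1/w)` with `w = 2r(1-r)`: writing
`Δ* = c · r · w` with `c = C / ∫ r² w`, one has pointwise
`(Δ - Δ*)² / w = Δ² / w - 2c · rΔ + c² · r² w`, so under the constraint `∫ rΔ = C`,
`∫ (Δ - Δ*)² / w = ∫ Δ² / w - C² / ∫ r² w`.
The left side is nonnegative and vanishes only if `Δ = Δ*` a.e., and `∫ r² w = 2 B_r`.
-/

open Function

section WeightedQuadratic

variable {α : Type*} [MeasurableSpace α] {μ : Measure α} {Δ a w : α → ℝ} {C : ℝ}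

lemma sq_sub_mul_div_eq {w : ℝ} (hw : w ≠ 0) (d a c : ℝ) :
    (d - c * (a * w)) ^ 2 / w = d ^ 2 / w - 2 * c * (a * d) + c ^ 2 * (a ^ 2 * w) := by
  field_simp
  ring

lemma sq_sub_mul_div_ae_eq (hw : ∀ᵐ x ∂μ, w x ≠ 0) (c : ℝ) :
    (fun x => (Δ x - c * (a x * w x)) ^ 2 / w x) =ᵐ[μ]
      fun x => Δ x ^ 2 / w x - 2 * c * (a x * Δ x) + c ^ 2 * (a x ^ 2 * w x) :=
  hw.mono fun _ hx => sq_sub_mul_div_eq hx _ _ _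

lemma integrable_sq_sub_mul_div (hw : ∀ᵐ x ∂μ, w x ≠ 0)
    (hΔ : Integrable (fun x => Δ x ^ 2 / w x) μ) (haΔ : Integrable (fun x => a x * Δ x) μ)
    (ha : Integrable (fun x => a x ^ 2 * w x) μ) (c : ℝ) :
    Integrable (fun x => (Δ x - c * (a x * w x)) ^ 2 / w x) μ :=
  ((hΔ.sub (haΔ.const_mul _)).add (ha.const_mul _)).congr (sq_sub_mul_div_ae_eq hw c).symm

lemma integral_sq_sub_mul_div (hw : ∀ᵐ x ∂μ, w x ≠ 0)
    (hΔ : Integrable (fun x => Δ x ^ 2 / w x) μ) (haΔ : Integrable (fun x => a x * Δ x) μ)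
    (ha : Integrable (fun x => a x ^ 2 * w x) μ) (c : ℝ) :
    ∫ x, (Δ x - c * (a x * w x)) ^ 2 / w x ∂μ =
      ∫ x, Δ x ^ 2 / w x ∂μ - 2 * c * ∫ x, a x * Δ x ∂μ + c ^ 2 * ∫ x, a x ^ 2 * w x ∂μ := by
  have hsub : Integrable (fun x => Δ x ^ 2 / w x - 2 * c * (a x * Δ x)) μ :=
    hΔ.sub (haΔ.const_mul _)
  rw [integral_congr_ae (sq_sub_mul_div_ae_eq hw c), integral_add hsub (ha.const_mul _),
    integral_sub hΔ (haΔ.const_mul _), integral_const_mul, integral_const_mul]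

theorem integral_sq_sub_minimizer_div (hw : ∀ᵐ x ∂μ, w x ≠ 0)
    (hΔ : Integrable (fun x => Δ x ^ 2 / w x) μ) (haΔ : Integrable (fun x => a x * Δ x) μ)
    (ha : Integrable (fun x => a x ^ 2 * w x) μ) (hC : ∫ x, a x * Δ x ∂μ = C) :
    ∫ x, (Δ x - C / (∫ y, a y ^ 2 * w y ∂μ) * (a x * w x)) ^ 2 / w x ∂μ =
      ∫ x, Δ x ^ 2 / w x ∂μ - C ^ 2 / ∫ y, a y ^ 2 * w y ∂μ := by
  rw [integral_sq_sub_mul_div hw hΔ haΔ ha, hC]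
  -- when `∫ a² w = 0` both correction terms are junk zeros
  rcases eq_or_ne (∫ y, a y ^ 2 * w y ∂μ) 0 with hK | hK
  · simp [hK]
  · field_simp
    ring

theorem div_le_integral_sq_div (hw : ∀ᵐ x ∂μ, 0 < w x)
    (hΔ : Integrable (fun x => Δ x ^ 2 / w x) μ) (haΔ : Integrable (fun x => a x * Δ x) μ)
    (ha : Integrable (fun x => a x ^ 2 * w x) μ) (hC : ∫ x, a x * Δ x ∂μ = C) :
    C ^ 2 / ∫ x, a x ^ 2 * w x ∂μ ≤ ∫ x, Δ x ^ 2 / w x ∂μ := by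
  have hsq := integral_sq_sub_minimizer_div (hw.mono fun _ hx => hx.ne') hΔ haΔ ha hC
  have hnonneg : 0 ≤ ∫ x, (Δ x - C / (∫ y, a y ^ 2 * w y ∂μ) * (a x * w x)) ^ 2 / w x ∂μ :=
    integral_nonneg_of_ae (hw.mono fun _ hx => div_nonneg (sq_nonneg _) hx.le)
  linarith

theorem ae_eq_minimizer_of_integral_sq_div_eq (hw : ∀ᵐ x ∂μ, 0 < w x)
    (hΔ : Integrable (fun x => Δ x ^ 2 / w x) μ) (haΔ : Integrable (fun x => a x * Δ x) μ)
    (ha : Integrable (fun x => a x ^ 2 * w x) μ) (hC : ∫ x, a x * Δ x ∂μ = C)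
    (hmin : ∫ x, Δ x ^ 2 / w x ∂μ = C ^ 2 / ∫ x, a x ^ 2 * w x ∂μ) :
    Δ =ᵐ[μ] fun x => C / (∫ y, a y ^ 2 * w y ∂μ) * (a x * w x) := by
  have hw' : ∀ᵐ x ∂μ, w x ≠ 0 := hw.mono fun _ hx => hx.ne'
  have hzero := integral_sq_sub_minimizer_div hw' hΔ haΔ ha hC
  rw [hmin, sub_self, integral_eq_zero_iff_of_nonneg_ae
    (hw.mono fun _ hx => div_nonneg (sq_nonneg _) hx.le)
    (integrable_sq_sub_mul_div hw' hΔ haΔ ha _)] at hzero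
  filter_upwards [hzero, hw'] with x hx hwx
  simpa [hwx, sub_eq_zero] using hx

end WeightedQuadratic

section BernoulliWeight

variable {α : Type*} [MeasurableSpace α] {μ : Measure α} {ρ Δ : α → ℝ} {η C : ℝ}

/-- The paper's `Δ*`, for a general measure in place of Lebesgue measure on `[0,1]²`. -/
noncomputable def optimalPerturbation (μ : Measure α) (ρ : α → ℝ) (C : ℝ) (x : α) : ℝ :=
  C / (∫ y, ρ y ^ 3 * (1 - ρ y) ∂μ) * ρ x ^ 2 * (1 - ρ x)

lemma ae_mem_Icc_zero_one (hη : 0 ≤ η) (hρ : ∀ᵐ x ∂μ, ρ x ∈ Icc η (1 - η)) :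
    ∀ᵐ x ∂μ, ρ x ∈ Icc (0 : ℝ) 1 :=
  hρ.mono fun _ hx => Icc_subset_Icc hη (by linarith) hx

lemma ae_sq_le_mul_one_sub (hη : 0 ≤ η) (hρ : ∀ᵐ x ∂μ, ρ x ∈ Icc η (1 - η)) :
    ∀ᵐ x ∂μ, η ^ 2 ≤ ρ x * (1 - ρ x) :=
  hρ.mono fun _ ⟨h₁, h₂⟩ => by nlinarith [mul_nonneg (sub_nonneg.2 h₁) (sub_nonneg.2 h₂)]

lemma integrable_pow_three_mul_one_sub [IsFiniteMeasure μ] (hρm : AEStronglyMeasurable ρ μ)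
    (hρ : ∀ᵐ x ∂μ, ρ x ∈ Icc (0 : ℝ) 1) : Integrable (fun x => ρ x ^ 3 * (1 - ρ x)) μ := by
  refine .of_bound ((hρm.pow 3).mul (aestronglyMeasurable_const.sub hρm)) 1 ?_
  filter_upwards [hρ] with x ⟨h₀, h₁⟩
  rw [Real.norm_eq_abs, abs_le]
  constructor <;> nlinarith [pow_le_one₀ (n := 3) h₀ h₁, pow_nonneg h₀ 3]

lemma integral_pow_three_mul_one_sub_pos [IsFiniteMeasure μ] [NeZero μ] (hη : 0 < η)
    (hρm : AEStronglyMeasurable ρ μ) (hρ : ∀ᵐ x ∂μ, ρ x ∈ Icc η (1 - η)) :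
    0 < ∫ x, ρ x ^ 3 * (1 - ρ x) ∂μ := by
  have hle : ∫ _, η ^ 4 ∂μ ≤ ∫ x, ρ x ^ 3 * (1 - ρ x) ∂μ := by
    refine integral_mono_ae (integrable_const _)
      (integrable_pow_three_mul_one_sub hρm (ae_mem_Icc_zero_one hη.le hρ)) ?_
    filter_upwards [hρ] with x ⟨h₁, h₂⟩
    have h₃ : η ^ 3 ≤ ρ x ^ 3 := pow_le_pow_left₀ hη.le h₁ 3
    calc η ^ 4 = η ^ 3 * η := by ring
      _ ≤ ρ x ^ 3 * (1 - ρ x) := mul_le_mul h₃ (by linarith) hη.le (pow_nonneg (hη.le.trans h₁) 3)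
  rw [integral_const, smul_eq_mul] at hle
  exact lt_of_lt_of_le (mul_pos measureReal_univ_pos (by positivity)) hle

lemma ae_weight_pos (hη : 0 < η) (hρ : ∀ᵐ x ∂μ, ρ x ∈ Icc η (1 - η)) :
    ∀ᵐ x ∂μ, 0 < 2 * ρ x * (1 - ρ x) :=
  (ae_sq_le_mul_one_sub hη.le hρ).mono fun _ hx => by nlinarith [pow_pos hη 2]

lemma integrable_sq_div_weight (hη : 0 < η) (hρm : AEStronglyMeasurable ρ μ)
    (hρ : ∀ᵐ x ∂μ, ρ x ∈ Icc η (1 - η)) (hΔ : Integrable (fun x => Δ x ^ 2) μ) :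
    Integrable (fun x => Δ x ^ 2 / (2 * ρ x * (1 - ρ x))) μ := by
  simp_rw [div_eq_mul_inv]
  refine hΔ.mul_bdd (((aestronglyMeasurable_const.mul hρm).mul
    (aestronglyMeasurable_const.sub hρm)).aemeasurable.inv.aestronglyMeasurable)
    (c := (2 * η ^ 2)⁻¹) ?_
  filter_upwards [ae_sq_le_mul_one_sub hη.le hρ] with x hx
  have hη₂ : 0 < 2 * η ^ 2 := by positivity
  rw [norm_inv, Real.norm_eq_abs, abs_of_pos (by linarith)]
  exact inv_anti₀ hη₂ (by linarith)

lemma integrable_mul_of_integrable_sq [IsFiniteMeasure μ] (hρm : AEStronglyMeasurable ρ μ)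
    (hρ : ∀ᵐ x ∂μ, ρ x ∈ Icc (0 : ℝ) 1) (hΔm : AEStronglyMeasurable Δ μ)
    (hΔ : Integrable (fun x => Δ x ^ 2) μ) : Integrable (fun x => ρ x * Δ x) μ := by
  refine (((memLp_two_iff_integrable_sq hΔm).2 hΔ).integrable one_le_two).bdd_mul hρm
    (c := 1) ?_
  filter_upwards [hρ] with x ⟨h₀, h₁⟩
  rw [Real.norm_eq_abs, abs_le]
  constructor <;> linarith

lemma integrable_sq_mul_weight [IsFiniteMeasure μ] (hρm : AEStronglyMeasurable ρ μ)
    (hρ : ∀ᵐ x ∂μ, ρ x ∈ Icc (0 : ℝ) 1) :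
    Integrable (fun x => ρ x ^ 2 * (2 * ρ x * (1 - ρ x))) μ :=
  ((integrable_pow_three_mul_one_sub hρm hρ).const_mul 2).congr
    (ae_of_all _ fun _ => by ring)

lemma integral_sq_mul_weight :
    ∫ x, ρ x ^ 2 * (2 * ρ x * (1 - ρ x)) ∂μ = 2 * ∫ x, ρ x ^ 3 * (1 - ρ x) ∂μ := by
  rw [← integral_const_mul]
  congr with x
  ring

lemma optimalPerturbation_mul_self (x : α) :
    optimalPerturbation μ ρ C x * ρ x =
      C / (∫ y, ρ y ^ 3 * (1 - ρ y) ∂μ) * (ρ x ^ 3 * (1 - ρ x)) := by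
  unfold optimalPerturbation
  ring

lemma integrable_optimalPerturbation_mul_self [IsFiniteMeasure μ]
    (hρm : AEStronglyMeasurable ρ μ) (hρ : ∀ᵐ x ∂μ, ρ x ∈ Icc (0 : ℝ) 1) :
    Integrable (fun x => optimalPerturbation μ ρ C x * ρ x) μ := by
  simp_rw [optimalPerturbation_mul_self]
  exact (integrable_pow_three_mul_one_sub hρm hρ).const_mul _

theorem integral_optimalPerturbation_mul_self [IsFiniteMeasure μ] [NeZero μ] (hη : 0 < η)
    (hρm : AEStronglyMeasurable ρ μ) (hρ : ∀ᵐ x ∂μ, ρ x ∈ Icc η (1 - η)) :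
    ∫ x, optimalPerturbation μ ρ C x * ρ x ∂μ = C := by
  simp_rw [optimalPerturbation_mul_self]
  rw [integral_const_mul, div_mul_cancel₀ _ (integral_pow_three_mul_one_sub_pos hη hρm hρ).ne']

lemma optimalPerturbation_sq_div_ae_eq (hη : 0 < η) (hρ : ∀ᵐ x ∂μ, ρ x ∈ Icc η (1 - η)) :
    (fun x => optimalPerturbation μ ρ C x ^ 2 / (2 * ρ x * (1 - ρ x))) =ᵐ[μ]
      fun x => (C / ∫ y, ρ y ^ 3 * (1 - ρ y) ∂μ) ^ 2 / 2 * (ρ x ^ 3 * (1 - ρ x)) := by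
  filter_upwards [hρ] with x ⟨h₁, h₂⟩
  have h₀ : ρ x ≠ 0 := by linarith
  have h₁ : 1 - ρ x ≠ 0 := by linarith
  unfold optimalPerturbation
  field_simp

lemma integrable_optimalPerturbation_sq_div [IsFiniteMeasure μ] (hη : 0 < η)
    (hρm : AEStronglyMeasurable ρ μ) (hρ : ∀ᵐ x ∂μ, ρ x ∈ Icc η (1 - η)) :
    Integrable (fun x => optimalPerturbation μ ρ C x ^ 2 / (2 * ρ x * (1 - ρ x))) μ :=
  ((integrable_pow_three_mul_one_sub hρm (ae_mem_Icc_zero_one hη.le hρ)).const_mul _).congr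
    (optimalPerturbation_sq_div_ae_eq hη hρ).symm

theorem integral_optimalPerturbation_sq_div (hη : 0 < η) (hρ : ∀ᵐ x ∂μ, ρ x ∈ Icc η (1 - η)) :
    ∫ x, optimalPerturbation μ ρ C x ^ 2 / (2 * ρ x * (1 - ρ x)) ∂μ =
      C ^ 2 / (2 * ∫ x, ρ x ^ 3 * (1 - ρ x) ∂μ) := by
  rw [integral_congr_ae (optimalPerturbation_sq_div_ae_eq hη hρ), integral_const_mul]
  rcases eq_or_ne (∫ x, ρ x ^ 3 * (1 - ρ x) ∂μ) 0 with hB | hB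
  · simp [hB]
  · field_simp

theorem div_le_integral_sq_div_weight [IsFiniteMeasure μ] (hη : 0 < η)
    (hρm : AEStronglyMeasurable ρ μ) (hρ : ∀ᵐ x ∂μ, ρ x ∈ Icc η (1 - η))
    (hΔm : AEStronglyMeasurable Δ μ) (hΔ : Integrable (fun x => Δ x ^ 2) μ)
    (hC : ∫ x, ρ x * Δ x ∂μ = C) :
    C ^ 2 / (2 * ∫ x, ρ x ^ 3 * (1 - ρ x) ∂μ) ≤ ∫ x, Δ x ^ 2 / (2 * ρ x * (1 - ρ x)) ∂μ := by
  have hρ₀₁ := ae_mem_Icc_zero_one hη.le hρ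
  rw [← integral_sq_mul_weight]
  exact div_le_integral_sq_div (ae_weight_pos hη hρ) (integrable_sq_div_weight hη hρm hρ hΔ)
    (integrable_mul_of_integrable_sq hρm hρ₀₁ hΔm hΔ) (integrable_sq_mul_weight hρm hρ₀₁) hC

theorem ae_eq_optimalPerturbation_of_integral_sq_div_eq [IsFiniteMeasure μ] (hη : 0 < η)
    (hρm : AEStronglyMeasurable ρ μ) (hρ : ∀ᵐ x ∂μ, ρ x ∈ Icc η (1 - η))
    (hΔm : AEStronglyMeasurable Δ μ) (hΔ : Integrable (fun x => Δ x ^ 2) μ)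
    (hC : ∫ x, ρ x * Δ x ∂μ = C)
    (hmin : ∫ x, Δ x ^ 2 / (2 * ρ x * (1 - ρ x)) ∂μ =
      C ^ 2 / (2 * ∫ x, ρ x ^ 3 * (1 - ρ x) ∂μ)) :
    Δ =ᵐ[μ] optimalPerturbation μ ρ C := by
  have hρ₀₁ := ae_mem_Icc_zero_one hη.le hρ
  rw [← integral_sq_mul_weight] at hmin
  filter_upwards [ae_eq_minimizer_of_integral_sq_div_eq (ae_weight_pos hη hρ)
    (integrable_sq_div_weight hη hρm hρ hΔ) (integrable_mul_of_integrable_sq hρm hρ₀₁ hΔm hΔ)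
    (integrable_sq_mul_weight hρm hρ₀₁) hC hmin] with x hx
  rw [hx, integral_sq_mul_weight, optimalPerturbation]
  ring

end BernoulliWeight

lemma volume_UI_prod_UI : volume (UI ×ˢ UI) = 1 := by
  rw [Measure.volume_eq_prod, Measure.prod_prod]
  simp [UI]

instance : IsProbabilityMeasure (volume.restrict (UI ×ˢ UI) : Measure (ℝ × ℝ)) :=
  ⟨by rw [Measure.restrict_apply_univ, volume_UI_prod_UI]⟩

lemma integral_UI_integral_UI {f : ℝ → ℝ → ℝ}
    (hf : Integrable (uncurry f) (volume.restrict (UI ×ˢ UI))) :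
    ∫ x in UI, ∫ y in UI, f x y = ∫ p in UI ×ˢ UI, uncurry f p :=
  (setIntegral_prod (uncurry f) hf).symm

theorem optimal_balanced_perturbation_general
    (r : ℝ → ℝ → ℝ) (η : ℝ) (hη : 0 < η)
    (hrmeas : Measurable (Function.uncurry r))
    (hrbound : ∀ x ∈ UI, ∀ y ∈ UI, r x y ∈ Set.Icc η (1 - η))
    (C : ℝ) :
    (∫ x in UI, ∫ y in UI,
        ((C / ∫ x' in UI, ∫ y' in UI, (r x' y') ^ 3 * (1 - r x' y')) *
            (r x y) ^ 2 * (1 - r x y)) * r x y = C) ∧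
    (∫ x in UI, ∫ y in UI,
        ((C / ∫ x' in UI, ∫ y' in UI, (r x' y') ^ 3 * (1 - r x' y')) *
            (r x y) ^ 2 * (1 - r x y)) ^ 2 / (2 * r x y * (1 - r x y)))
      = C ^ 2 / (2 * ∫ x in UI, ∫ y in UI, (r x y) ^ 3 * (1 - r x y)) ∧
    (∀ Δ : ℝ → ℝ → ℝ, Measurable (Function.uncurry Δ) → (∀ x y, Δ x y = Δ y x) →
      IntegrableOn (fun p : ℝ × ℝ => (Δ p.1 p.2) ^ 2) (UI ×ˢ UI) →
      (∫ x in UI, ∫ y in UI, r x y * Δ x y) = C →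
        C ^ 2 / (2 * ∫ x in UI, ∫ y in UI, (r x y) ^ 3 * (1 - r x y))
          ≤ ∫ x in UI, ∫ y in UI, (Δ x y) ^ 2 / (2 * r x y * (1 - r x y))) ∧
    (∀ Δ : ℝ → ℝ → ℝ, Measurable (Function.uncurry Δ) → (∀ x y, Δ x y = Δ y x) →
      IntegrableOn (fun p : ℝ × ℝ => (Δ p.1 p.2) ^ 2) (UI ×ˢ UI) →
      (∫ x in UI, ∫ y in UI, r x y * Δ x y) = C →
      (∫ x in UI, ∫ y in UI, (Δ x y) ^ 2 / (2 * r x y * (1 - r x y)))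
          = C ^ 2 / (2 * ∫ x in UI, ∫ y in UI, (r x y) ^ 3 * (1 - r x y)) →
        ∀ᵐ p ∂(volume.restrict (UI ×ˢ UI)),
          Δ p.1 p.2 = (C / ∫ x' in UI, ∫ y' in UI, (r x' y') ^ 3 * (1 - r x' y')) *
            (r p.1 p.2) ^ 2 * (1 - r p.1 p.2)) := by
  have hr : ∀ᵐ p ∂(volume.restrict (UI ×ˢ UI)), uncurry r p ∈ Icc η (1 - η) :=
    ae_restrict_of_forall_mem ((measurableSet_Icc : MeasurableSet UI).prod measurableSet_Icc)
      fun p hp => hrbound _ hp.1 _ hp.2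
  have hrm : AEStronglyMeasurable (uncurry r) (volume.restrict (UI ×ˢ UI)) :=
    hrmeas.aestronglyMeasurable
  have hr₀₁ := ae_mem_Icc_zero_one hη.le hr
  rw [integral_UI_integral_UI (f := fun x y => r x y ^ 3 * (1 - r x y))
    (integrable_pow_three_mul_one_sub hrm hr₀₁)]
  refine ⟨?_, ?_, fun Δ hΔm _ hΔ hC => ?_, fun Δ hΔm _ hΔ hC hmin => ?_⟩
  · rw [integral_UI_integral_UI]
    exacts [integral_optimalPerturbation_mul_self hη hrm hr,
      integrable_optimalPerturbation_mul_self hrm hr₀₁]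
  · rw [integral_UI_integral_UI]
    exacts [integral_optimalPerturbation_sq_div hη hr,
      integrable_optimalPerturbation_sq_div hη hrm hr]
  · rw [integral_UI_integral_UI] at hC ⊢
    exacts [div_le_integral_sq_div_weight hη hrm hr hΔm.aestronglyMeasurable hΔ hC,
      integrable_sq_div_weight hη hrm hr hΔ,
      integrable_mul_of_integrable_sq hrm hr₀₁ hΔm.aestronglyMeasurable hΔ]
  · rw [integral_UI_integral_UI] at hC hmin
    exacts [ae_eq_optimalPerturbation_of_integral_sq_div_eq hη hrm hr
        hΔm.aestronglyMeasurable hΔ hC hmin,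
      integrable_sq_div_weight hη hrm hr hΔ,
      integrable_mul_of_integrable_sq hrm hr₀₁ hΔm.aestronglyMeasurable hΔ]

/-- the infimum of ∫∫ Δ²/(2r(1−r)) over symmetric Δ ∈ L²([0,1]²) with
∫∫ rΔ = C equals C²/(2B_r), attained uniquely at Δ* = (C/B_r)·r²(1−r). -/
theorem optimal_balanced_perturbation
    (r : ℝ → ℝ → ℝ) (η : ℝ) (hη : 0 < η)
    (hrmeas : Measurable (Function.uncurry r))
    (hrsymm : ∀ x y, r x y = r y x)
    (hrbound : ∀ x ∈ UI, ∀ y ∈ UI, r x y ∈ Set.Icc η (1 - η))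
    (C : ℝ) (hC : 0 < C) :
    (∫ x in UI, ∫ y in UI,
        ((C / ∫ x' in UI, ∫ y' in UI, (r x' y') ^ 3 * (1 - r x' y')) *
            (r x y) ^ 2 * (1 - r x y)) * r x y = C) ∧
    (∫ x in UI, ∫ y in UI,
        ((C / ∫ x' in UI, ∫ y' in UI, (r x' y') ^ 3 * (1 - r x' y')) *
            (r x y) ^ 2 * (1 - r x y)) ^ 2 / (2 * r x y * (1 - r x y)))
      = C ^ 2 / (2 * ∫ x in UI, ∫ y in UI, (r x y) ^ 3 * (1 - r x y)) ∧
    (∀ Δ : ℝ → ℝ → ℝ, Measurable (Function.uncurry Δ) → (∀ x y, Δ x y = Δ y x) →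
      IntegrableOn (fun p : ℝ × ℝ => (Δ p.1 p.2) ^ 2) (UI ×ˢ UI) →
      (∫ x in UI, ∫ y in UI, r x y * Δ x y) = C →
        C ^ 2 / (2 * ∫ x in UI, ∫ y in UI, (r x y) ^ 3 * (1 - r x y))
          ≤ ∫ x in UI, ∫ y in UI, (Δ x y) ^ 2 / (2 * r x y * (1 - r x y))) ∧
    (∀ Δ : ℝ → ℝ → ℝ, Measurable (Function.uncurry Δ) → (∀ x y, Δ x y = Δ y x) →
      IntegrableOn (fun p : ℝ × ℝ => (Δ p.1 p.2) ^ 2) (UI ×ˢ UI) →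
      (∫ x in UI, ∫ y in UI, r x y * Δ x y) = C →
      (∫ x in UI, ∫ y in UI, (Δ x y) ^ 2 / (2 * r x y * (1 - r x y)))
          = C ^ 2 / (2 * ∫ x in UI, ∫ y in UI, (r x y) ^ 3 * (1 - r x y)) →
        ∀ᵐ p ∂(volume.restrict (UI ×ˢ UI)),
          Δ p.1 p.2 = (C / ∫ x' in UI, ∫ y' in UI, (r x' y') ^ 3 * (1 - r x' y')) *
            (r p.1 p.2) ^ 2 * (1 - r p.1 p.2)) :=
  optimal_balanced_perturbation_general r η hη hrmeas hrbound C
end
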